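/- arXiv:2505.12451 — 7 statements merged into one kernel-verified Lean document; each statement's English description precedes it below -/
import Mathlib

section
/- Let c_1 < ⋯ < c_m be distinct real numbers, 1 ≤ k ≤ m, and ℓ, T ∈ ℝ with ℓ ≤ T. Then min S_k(ℓ) ≤ min S_k(T) and max S_k(ℓ) ≤ max S_k(T), i.e., the block of top-k indices moves weakly to the right as the voter position moves right. -/
/-- Candidate `i` is ranked above candidate `j` by a voter at position `T`:
either strictly closer, or tied in distance with the smaller index winning. -/
def prefers {m : ℕ} (c : Fin m → ℝ) (T : ℝ) (i j : Fin m) : Prop :=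
  |T - c i| < |T - c j| ∨ (|T - c i| = |T - c j| ∧ i < j)

noncomputable instance {m : ℕ} (c : Fin m → ℝ) (T : ℝ) (i j : Fin m) :
    Decidable (prefers c T i j) :=
  inferInstanceAs (Decidable (_ ∨ _))

/-- The set of indices of the `k` highest-ranked candidates for a voter at position `T`:
those with fewer than `k` candidates ranked above them. -/
noncomputable def topk {m : ℕ} (c : Fin m → ℝ) (T : ℝ) (k : ℕ) : Finset (Fin m) :=
  Finset.univ.filter fun i => (Finset.univ.filter fun j => prefers c T j i).card < k

section aux

open Finset

variable {m : ℕ} {c : Fin m → ℝ} {T : ℝ}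

lemma prefers_irrefl (c : Fin m → ℝ) (T : ℝ) (i : Fin m) : ¬ prefers c T i i := by
  simp [prefers]

lemma prefers_trans {i j l : Fin m} (h1 : prefers c T i j) (h2 : prefers c T j l) :
    prefers c T i l := by
  rcases h1 with h1 | ⟨h1, h1'⟩ <;> rcases h2 with h2 | ⟨h2, h2'⟩
  · exact Or.inl (h1.trans h2)
  · exact Or.inl (h2 ▸ h1)
  · exact Or.inl (h1 ▸ h2)
  · exact Or.inr ⟨h1.trans h2, h1'.trans h2'⟩

lemma prefers_total (c : Fin m → ℝ) (T : ℝ) {i j : Fin m} (h : i ≠ j) :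
    prefers c T i j ∨ prefers c T j i := by
  rcases lt_trichotomy (|T - c i|) (|T - c j|) with h' | h' | h'
  · exact Or.inl (Or.inl h')
  · rcases lt_or_gt_of_ne h with hij | hij
    · exact Or.inl (Or.inr ⟨h', hij⟩)
    · exact Or.inr (Or.inr ⟨h'.symm, hij⟩)
  · exact Or.inr (Or.inl h')

lemma prefers_asymm {i j : Fin m} (h : prefers c T i j) : ¬ prefers c T j i := by
  intro h'
  exact prefers_irrefl c T i (prefers_trans h h')

/-- rank of `i`: number of candidates strictly preferred over `i`. -/
noncomputable def rk (c : Fin m → ℝ) (T : ℝ) (i : Fin m) : ℕ :=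
  (Finset.univ.filter fun j => prefers c T j i).card

lemma mem_topk {k : ℕ} {i : Fin m} : i ∈ topk c T k ↔ rk c T i < k := by
  simp [topk, rk, Finset.mem_filter]

lemma rk_lt_rk {i j : Fin m} (h : prefers c T i j) : rk c T i < rk c T j := by
  apply Finset.card_lt_card
  constructor
  · intro x hx
    simp only [Finset.mem_filter, Finset.mem_univ, true_and] at hx ⊢
    exact prefers_trans hx h
  · intro hsub
    have := hsub (by simp [h] : i ∈ Finset.univ.filter fun j' => prefers c T j' j)
    simp only [Finset.mem_filter, Finset.mem_univ, true_and] at this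
    exact prefers_irrefl c T i this

lemma rk_lt_m (c : Fin m → ℝ) (T : ℝ) (i : Fin m) : rk c T i < m := by
  show (Finset.univ.filter fun j => prefers c T j i).card < m
  have hsub : (Finset.univ.filter fun j => prefers c T j i) ⊆ Finset.univ.erase i := by
    intro x hx
    simp only [Finset.mem_filter, Finset.mem_univ, true_and] at hx
    refine Finset.mem_erase.2 ⟨?_, Finset.mem_univ x⟩
    rintro rfl
    exact prefers_irrefl c T _ hx
  have := Finset.card_le_card hsub
  rw [Finset.card_erase_of_mem (Finset.mem_univ i), Finset.card_univ, Fintype.card_fin] at this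
  exact lt_of_le_of_lt this (Nat.sub_lt i.pos Nat.one_pos)

lemma card_topk (c : Fin m → ℝ) (T : ℝ) {k : ℕ} (hkm : k ≤ m) :
    (topk c T k).card = k := by
  classical
  set ρ : Fin m → Fin m := fun i => ⟨rk c T i, rk_lt_m c T i⟩ with hρ
  have hinj : Function.Injective ρ := by
    intro i j hij
    by_contra hne
    rcases prefers_total c T hne with h | h
    · have := rk_lt_rk (c := c) (T := T) h
      simp only [hρ, Fin.mk.injEq] at hij
      omega
    · have := rk_lt_rk (c := c) (T := T) h
      simp only [hρ, Fin.mk.injEq] at hij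
      omega
  have h1 : (topk c T k).card =
      (Finset.univ.filter fun v : Fin m => (v : ℕ) < k).card := by
    apply Finset.card_bij (fun i _ => ρ i)
    · intro a ha
      simp only [Finset.mem_filter, Finset.mem_univ, true_and]
      exact mem_topk.1 ha
    · intro a ha b hb hab
      exact hinj hab
    · intro b hb
      obtain ⟨a, rfl⟩ := Finite.surjective_of_injective hinj b
      refine ⟨a, ?_, rfl⟩
      simp only [Finset.mem_filter, Finset.mem_univ, true_and] at hb
      exact mem_topk.2 hb
  have h2 : (Finset.univ.filter fun v : Fin m => (v : ℕ) < k) =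
      (Finset.range k).attachFin (fun x hx => lt_of_lt_of_le (Finset.mem_range.1 hx) hkm) := by
    ext i
    simp [Finset.mem_attachFin, Finset.mem_range]
  rw [h1, h2, Finset.card_attachFin, Finset.card_range]

/-- Geometric characterization: for `i < j`, `i` is preferred iff `T` is weakly left
of the midpoint. -/
lemma prefers_iff_left (hc : StrictMono c) {i j : Fin m} (hij : i < j) :
    prefers c T i j ↔ T ≤ (c i + c j) / 2 := by
  have hcij : c i < c j := hc hij
  unfold prefers
  constructor
  · rintro (h | ⟨h, -⟩) <;>
      rcases abs_cases (T - c i) with ⟨h1, h2⟩ | ⟨h1, h2⟩ <;>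
      rcases abs_cases (T - c j) with ⟨h3, h4⟩ | ⟨h3, h4⟩ <;> linarith
  · intro h
    rcases lt_or_eq_of_le h with h | h
    · left
      rcases abs_cases (T - c i) with ⟨h1, h2⟩ | ⟨h1, h2⟩ <;>
        rcases abs_cases (T - c j) with ⟨h3, h4⟩ | ⟨h3, h4⟩ <;> linarith
    · right
      refine ⟨?_, hij⟩
      rcases abs_cases (T - c i) with ⟨h1, h2⟩ | ⟨h1, h2⟩ <;>
        rcases abs_cases (T - c j) with ⟨h3, h4⟩ | ⟨h3, h4⟩ <;> linarith

lemma prefers_iff_right (hc : StrictMono c) {i j : Fin m} (hij : i < j) :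
    prefers c T j i ↔ (c i + c j) / 2 < T := by
  have h1 : prefers c T j i ↔ ¬ prefers c T i j := by
    constructor
    · exact fun h => prefers_asymm h
    · intro h
      rcases prefers_total c T (ne_of_lt hij) with h' | h'
      · exact absurd h' h
      · exact h'
  rw [h1, prefers_iff_left hc hij, not_le]

lemma prefers_of_mem_not_mem {k : ℕ} {i j : Fin m} (hi : i ∈ topk c T k)
    (hj : j ∉ topk c T k) : prefers c T i j := by
  have hri := mem_topk.1 hi
  have hrj : ¬ rk c T j < k := fun h => hj (mem_topk.2 h)
  have hne : i ≠ j := by rintro rfl; exact hrj hri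
  rcases prefers_total c T hne with h | h
  · exact h
  · exact absurd (rk_lt_rk h) (by omega)

/-- the top-k set is a contiguous interval. -/
lemma topk_eq_Icc (hc : StrictMono c) {k : ℕ} (hk1 : 1 ≤ k) (hkm : k ≤ m)
    (hne : (topk c T k).Nonempty) :
    topk c T k = Finset.Icc ((topk c T k).min' hne) ((topk c T k).max' hne) := by
  apply Finset.Subset.antisymm
  · intro i hi
    exact Finset.mem_Icc.2 ⟨Finset.min'_le _ _ hi, Finset.le_max' _ _ hi⟩
  · intro j hj
    rw [Finset.mem_Icc] at hj
    obtain ⟨haj, hjb⟩ := hj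
    set a := (topk c T k).min' hne with ha
    set b := (topk c T k).max' hne with hb
    have hamem : a ∈ topk c T k := Finset.min'_mem _ _
    have hbmem : b ∈ topk c T k := Finset.max'_mem _ _
    rcases eq_or_lt_of_le haj with rfl | haj
    · exact hamem
    rcases eq_or_lt_of_le hjb with rfl | hjb
    · exact hbmem
    -- a < j < b
    have key : prefers c T j a ∨ prefers c T j b := by
      by_contra hcon
      push_neg at hcon
      obtain ⟨h1, h2⟩ := hcon
      have ha' : prefers c T a j := by
        rcases prefers_total c T (ne_of_lt haj) with h | h
        · exact h
        · exact absurd h h1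
      have hb' : prefers c T b j := by
        rcases prefers_total c T (ne_of_gt hjb) with h | h
        · exact h
        · exact absurd h h2
      rw [prefers_iff_left hc haj] at ha'
      rw [prefers_iff_right hc hjb] at hb'
      have hcaj : c a < c j := hc haj
      have hcjb : c j < c b := hc hjb
      linarith
    rcases key with h | h
    · exact mem_topk.2 (lt_trans (rk_lt_rk h) (mem_topk.1 hamem))
    · exact mem_topk.2 (lt_trans (rk_lt_rk h) (mem_topk.1 hbmem))

end aux

/-- As the voter position moves right, the block of top-`k` indices moves weakly right:
both its minimum and its maximum are monotone. -/
theorem topk_min_max_mono {m : ℕ} (c : Fin m → ℝ) (hc : StrictMono c)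
    (k : ℕ) (hk1 : 1 ≤ k) (hkm : k ≤ m) (ℓ T : ℝ) (hlT : ℓ ≤ T) :
    (topk c ℓ k).min ≤ (topk c T k).min ∧ (topk c ℓ k).max ≤ (topk c T k).max := by
  classical
  have hneℓ : (topk c ℓ k).Nonempty :=
    Finset.card_pos.1 (by rw [card_topk c ℓ hkm]; omega)
  have hneT : (topk c T k).Nonempty :=
    Finset.card_pos.1 (by rw [card_topk c T hkm]; omega)
  set aℓ := (topk c ℓ k).min' hneℓ with haℓ
  set bℓ := (topk c ℓ k).max' hneℓ with hbℓ
  set aT := (topk c T k).min' hneT with haT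
  set bT := (topk c T k).max' hneT with hbT
  have hIccℓ := topk_eq_Icc (T := ℓ) hc hk1 hkm hneℓ
  have hIccT := topk_eq_Icc (T := T) hc hk1 hkm hneT
  have hab_ℓ : aℓ ≤ bℓ := Finset.min'_le _ _ (Finset.max'_mem _ _)
  have hab_T : aT ≤ bT := Finset.min'_le _ _ (Finset.max'_mem _ _)
  have hcardℓ : (bℓ : ℕ) + 1 - (aℓ : ℕ) = k := by
    have := card_topk c ℓ (k := k) hkm
    rw [hIccℓ, Fin.card_Icc] at this
    exact this
  have hcardT : (bT : ℕ) + 1 - (aT : ℕ) = k := by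
    have := card_topk c T (k := k) hkm
    rw [hIccT, Fin.card_Icc] at this
    exact this
  have habℓ' : (aℓ : ℕ) ≤ (bℓ : ℕ) := hab_ℓ
  have habT' : (aT : ℕ) ≤ (bT : ℕ) := hab_T
  -- core: bT < bℓ leads to contradiction
  have core : ¬ (bT < bℓ) := by
    intro hblt
    have haltn : (aT : ℕ) < (aℓ : ℕ) := by
      have h1 : (bℓ : ℕ) + 1 = (aℓ : ℕ) + k := by omega
      have h2 : (bT : ℕ) + 1 = (aT : ℕ) + k := by omega
      have : (bT : ℕ) < (bℓ : ℕ) := hblt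
      omega
    have halt : aT < aℓ := haltn
    have hbℓT : bℓ ∉ topk c T k := by
      rw [hIccT]
      intro h
      exact absurd (Finset.mem_Icc.1 h).2 (not_le.2 hblt)
    have haTℓ : aT ∉ topk c ℓ k := by
      rw [hIccℓ]
      intro h
      exact absurd (Finset.mem_Icc.1 h).1 (not_le.2 halt)
    have haTmem : aT ∈ topk c T k := Finset.min'_mem _ _
    have hbℓmem : bℓ ∈ topk c ℓ k := Finset.max'_mem _ _
    have hlt : aT < bℓ := lt_of_le_of_lt hab_T hblt
    have h1 : prefers c T aT bℓ := prefers_of_mem_not_mem haTmem hbℓT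
    have h2 : prefers c ℓ bℓ aT := prefers_of_mem_not_mem hbℓmem haTℓ
    rw [prefers_iff_left hc hlt] at h1
    rw [prefers_iff_right hc hlt] at h2
    linarith
  have hble : bℓ ≤ bT := not_lt.1 core
  have hale : aℓ ≤ aT := by
    have h1 : (bℓ : ℕ) + 1 = (aℓ : ℕ) + k := by omega
    have h2 : (bT : ℕ) + 1 = (aT : ℕ) + k := by omega
    have : (bℓ : ℕ) ≤ (bT : ℕ) := hble
    have : (aℓ : ℕ) ≤ (aT : ℕ) := by omega
    exact this
  constructor
  · rw [← Finset.coe_min' hneℓ, ← Finset.coe_min' hneT]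
    exact_mod_cast hale
  · rw [← Finset.coe_max' hneℓ, ← Finset.coe_max' hneT]
    exact_mod_cast hble
end

section
/- Let c_1 < ⋯ < c_m be distinct real numbers and let k be an integer with 2k > m. Then for every index i with m − k + 1 ≤ i ≤ k and every T ∈ ℝ, the number of indices j with |T − c_j| < |T − c_i| is at most k − 1; consequently i ∈ S_k(T), i.e., c_i is among the top k candidates of every voter regardless of the voter's position. -/
/-!
A candidate `j` ranked above `i` by a voter at `T` is at distance at most `|T - c i|` from `T`,
strictly so when `i < j`, since ties go to the smaller index. Hence no two such candidates can
lie on opposite sides of `i`: with `c j < c i < c j'`, the point `c i` would be strictly inside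
the window `[T - d, T + d)` of radius `d = |T - c i|`. So all of them lie below `i` or all above,
and there are at most `max i (m - 1 - i) ≤ k - 1` of them.
-/

theorem abs_sub_lt_of_lt_of_lt {α : Type*} [AddCommGroup α] [LinearOrder α] [IsOrderedAddMonoid α]
    {T a x b d : α} (hax : a < x) (hxb : x < b) (ha : |T - a| ≤ d) (hb : |T - b| < d) :
    |T - x| < d := by
  obtain ⟨-, ha⟩ := abs_le.mp ha
  obtain ⟨hb, -⟩ := abs_lt.mp hb
  exact abs_lt.mpr ⟨hb.trans (sub_lt_sub_left hxb T), (sub_lt_sub_left hax T).trans_le ha⟩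

section prefers

variable {m : ℕ} {c : Fin m → ℝ} {T : ℝ} {i j : Fin m}

theorem prefers_of_abs_lt (h : |T - c j| < |T - c i|) : prefers c T j i :=
  Or.inl h

theorem not_prefers_self : ¬ prefers c T i i := by
  rintro (h | ⟨-, h⟩) <;> exact lt_irrefl _ h

theorem prefers.abs_le (h : prefers c T j i) : |T - c j| ≤ |T - c i| := by
  rcases h with h | ⟨h, -⟩
  exacts [h.le, h.le]

theorem prefers.abs_lt_of_lt (h : prefers c T j i) (hij : i < j) : |T - c j| < |T - c i| := by
  rcases h with h | ⟨-, h⟩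
  exacts [h, absurd hij h.not_gt]

theorem not_prefers_of_prefers_of_lt_of_lt (hc : StrictMono c) {j' : Fin m} (hji : j < i)
    (hij' : i < j') (hj : prefers c T j i) : ¬ prefers c T j' i := fun hj' =>
  lt_irrefl _ <|
    abs_sub_lt_of_lt_of_lt (hc hji) (hc hij') hj.abs_le (hj'.abs_lt_of_lt hij')

end prefers

theorem Fin.card_le_max_of_notMem_of_not_straddle {m : ℕ} {s : Finset (Fin m)} {i : Fin m}
    (hi : i ∉ s) (hs : ∀ j ∈ s, j < i → ∀ j' ∈ s, ¬ i < j') :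
    s.card ≤ max (i : ℕ) (m - 1 - i) := by
  by_cases habove : ∃ j' ∈ s, i < j'
  · obtain ⟨j', hj's, hij'⟩ := habove
    have hsub : s ⊆ Finset.Ioi i := fun j hj => by
      rcases lt_trichotomy j i with hji | rfl | hij
      exacts [absurd hij' (hs j hj hji j' hj's), absurd hj hi, Finset.mem_Ioi.mpr hij]
    exact (Finset.card_le_card hsub).trans ((Fin.card_Ioi i).le.trans (le_max_right _ _))
  · push Not at habove
    have hsub : s ⊆ Finset.Iio i := fun j hj => by
      rcases lt_trichotomy j i with hji | rfl | hij
      exacts [Finset.mem_Iio.mpr hji, absurd hj hi, absurd hij (habove j hj).not_gt]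
    exact (Finset.card_le_card hsub).trans ((Fin.card_Iio i).le.trans (le_max_left _ _))

theorem card_filter_prefers_le {m : ℕ} {c : Fin m → ℝ} (hc : StrictMono c) (T : ℝ) (i : Fin m) :
    (Finset.univ.filter fun j => prefers c T j i).card ≤ max (i : ℕ) (m - 1 - i) := by
  refine Fin.card_le_max_of_notMem_of_not_straddle (by simpa using not_prefers_self) ?_
  intro j hj hji j' hj'
  simp only [Finset.mem_filter, Finset.mem_univ, true_and] at hj hj'
  exact fun hij' => not_prefers_of_prefers_of_lt_of_lt hc hji hij' hj hj'

theorem middle_always_topk_general {m : ℕ} (c : Fin m → ℝ) (hc : StrictMono c)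
    (k : ℕ) (i : Fin m)
    (h1 : m - k + 1 ≤ (i : ℕ) + 1) (h2 : (i : ℕ) + 1 ≤ k) (T : ℝ) :
    (Finset.univ.filter fun j => |T - c j| < |T - c i|).card ≤ k - 1 ∧
      i ∈ topk c T k := by
  have hpreferred : (Finset.univ.filter fun j => prefers c T j i).card ≤ k - 1 :=
    (card_filter_prefers_le hc T i).trans (by omega)
  refine ⟨(Finset.card_le_card ?_).trans hpreferred, ?_⟩
  · exact Finset.monotone_filter_right _ fun _ _ => prefers_of_abs_lt
  · simp only [topk, Finset.mem_filter, Finset.mem_univ, true_and]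
    omega

/-- If `2k > m`, then every candidate with (1-based) index between `m − k + 1` and `k`
has at most `k − 1` candidates strictly closer to any position `T`, and is therefore
among the top `k` candidates of every voter. -/
theorem middle_always_topk {m : ℕ} (c : Fin m → ℝ) (hc : StrictMono c)
    (k : ℕ) (hk : m < 2 * k) (i : Fin m)
    (h1 : m - k + 1 ≤ (i : ℕ) + 1) (h2 : (i : ℕ) + 1 ≤ k) (T : ℝ) :
    (Finset.univ.filter fun j => |T - c j| < |T - c i|).card ≤ k - 1 ∧
      i ∈ topk c T k :=
  middle_always_topk_general c hc k i h1 h2 T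
end

section
/- Consider weighted k-approval spatial voting on ℝ with candidates c_1 < ⋯ < c_m and 2k > m. Then for every profile of voter positions T_1, …, T_n ∈ ℝ and nonnegative weights w_1, …, w_n, every candidate c_i with m − k + 1 ≤ i ≤ k has score equal to w_1 + ⋯ + w_n, which is at least the score of every candidate; hence every such c_i is a winner in every completion (a necessary winner). -/
/-- The weighted `k`-approval score of candidate `i`: the sum of the weights of the
voters whose top-`k` set contains `i`. -/
noncomputable def score {m n : ℕ} (c : Fin m → ℝ) (k : ℕ) (w T : Fin n → ℝ)
    (i : Fin m) : ℝ :=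
  ∑ j, if i ∈ topk c (T j) k then w j else 0

lemma mem_topk_middle {m : ℕ} (c : Fin m → ℝ) (hc : StrictMono c)
    (k : ℕ) (hk : m < 2 * k) (i : Fin m) (h1 : m - k ≤ (i : ℕ))
    (h2 : (i : ℕ) + 1 ≤ k) (t : ℝ) : i ∈ topk c t k := by
  simp only [topk, Finset.mem_filter, Finset.mem_univ, true_and]
  rcases le_or_gt t (c i) with ht | ht
  · have hsub : (Finset.univ.filter fun j => prefers c t j i) ⊆ Finset.Iio i := by
      intro j hj
      simp only [Finset.mem_filter, Finset.mem_univ, true_and] at hj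
      simp only [Finset.mem_Iio]
      by_contra hji
      push_neg at hji
      rcases eq_or_lt_of_le hji with h | h
      · subst h; rcases hj with h | ⟨_, h⟩ <;> exact absurd h (by simp)
      · have hcij : c i < c j := hc h
        have : |t - c i| < |t - c j| := by
          rw [abs_of_nonpos (by linarith), abs_of_nonpos (by linarith)]
          linarith
        rcases hj with h' | ⟨h', _⟩ <;> linarith
    calc (Finset.univ.filter fun j => prefers c t j i).card
        ≤ (Finset.Iio i).card := Finset.card_le_card hsub
      _ = (i : ℕ) := by simp [Fin.card_Iio]
      _ < k := h2
  · have hsub : (Finset.univ.filter fun j => prefers c t j i) ⊆ Finset.Ioi i := by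
      intro j hj
      simp only [Finset.mem_filter, Finset.mem_univ, true_and] at hj
      simp only [Finset.mem_Ioi]
      by_contra hji
      push_neg at hji
      rcases eq_or_lt_of_le hji with h | h
      · subst h; rcases hj with h | ⟨_, h⟩ <;> exact absurd h (by simp)
      · have hcij : c j < c i := hc h
        have : |t - c i| < |t - c j| := by
          rw [abs_of_nonneg (by linarith), abs_of_nonneg (by linarith)]
          linarith
        rcases hj with h' | ⟨h', _⟩ <;> linarith
    have hcard : (Finset.Ioi i).card = m - 1 - (i : ℕ) := by
      rw [Fin.card_Ioi]
    calc (Finset.univ.filter fun j => prefers c t j i).card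
        ≤ (Finset.Ioi i).card := Finset.card_le_card hsub
      _ = m - 1 - (i : ℕ) := hcard
      _ < k := by omega

/-- If `2k > m`, every candidate with (1-based) index between `m − k + 1` and `k` gets
score equal to the total weight, which is at least every candidate's score. -/
theorem middle_necessary_winner {m n : ℕ} (c : Fin m → ℝ) (hc : StrictMono c)
    (k : ℕ) (hk : m < 2 * k) (T w : Fin n → ℝ) (hw : ∀ j, 0 ≤ w j)
    (i : Fin m) (h1 : m - k + 1 ≤ (i : ℕ) + 1) (h2 : (i : ℕ) + 1 ≤ k) :
    score c k w T i = ∑ j, w j ∧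
      ∀ i' : Fin m, score c k w T i' ≤ score c k w T i := by
  have hmem : ∀ t, i ∈ topk c t k :=
    mem_topk_middle c hc k hk i (by omega) h2
  have heq : score c k w T i = ∑ j, w j := by
    unfold score
    exact Finset.sum_congr rfl fun j _ => by simp [hmem]
  refine ⟨heq, fun i' => ?_⟩
  rw [heq]
  unfold score
  apply Finset.sum_le_sum
  intro j _
  split <;> simp [hw j]
end

section
/- Let c_1 < ⋯ < c_m be distinct real numbers, 1 ≤ k ≤ m, and let i* be an index with i* ≤ k. For all real numbers ℓ ≤ T: if i* ∈ S_k(T), then i* ∈ S_k(ℓ). (Symmetrically, if i* ≥ m − k + 1 and T ≤ u and i* ∈ S_k(T), then i* ∈ S_k(u).) -/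
lemma absdiff_mono (a b l T : ℝ) (h : l ≤ T) (hab : a < b) :
    |T - b| - |T - a| ≤ |l - b| - |l - a| := by
  rcases abs_cases (T - b) with ⟨h1, h1'⟩ | ⟨h1, h1'⟩ <;>
  rcases abs_cases (T - a) with ⟨h2, h2'⟩ | ⟨h2, h2'⟩ <;>
  rcases abs_cases (l - b) with ⟨h3, h3'⟩ | ⟨h3, h3'⟩ <;>
  rcases abs_cases (l - a) with ⟨h4, h4'⟩ | ⟨h4, h4'⟩ <;> linarith

/-- A left-half candidate (1-based index `≤ k`) that is in the top-`k` set at some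
position `T` is also in the top-`k` set at every position `ℓ ≤ T`; symmetrically, a
right-half candidate (1-based index `≥ m − k + 1`) in the top-`k` set at `T` is also in
the top-`k` set at every position `u ≥ T`. -/
theorem topk_endpoint {m : ℕ} (c : Fin m → ℝ) (hc : StrictMono c)
    (k : ℕ) (hk1 : 1 ≤ k) (hkm : k ≤ m) (istar : Fin m) :
    (∀ ℓ T : ℝ, ℓ ≤ T → (istar : ℕ) + 1 ≤ k →
      istar ∈ topk c T k → istar ∈ topk c ℓ k) ∧
    (∀ T u : ℝ, T ≤ u → m - k + 1 ≤ (istar : ℕ) + 1 →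
      istar ∈ topk c T k → istar ∈ topk c u k) := by
  constructor
  · -- left-half case
    intro ℓ T hlT hik hT
    simp only [topk, Finset.mem_filter, Finset.mem_univ, true_and] at hT ⊢
    by_cases hcase : ∃ j : Fin m, istar < j ∧ prefers c ℓ j istar
    · -- some higher candidate is preferred at ℓ, hence ℓ > c istar
      obtain ⟨j0, hj0, hp0⟩ := hcase
      have hcij : c istar < c j0 := hc hj0
      have hstrict0 : |ℓ - c j0| < |ℓ - c istar| := by
        rcases hp0 with h | ⟨h, hlt⟩
        · exact h
        · exact absurd hlt (not_lt.mpr hj0.le)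
      have hcl : c istar < ℓ := by
        by_contra hle
        push_neg at hle
        rw [abs_of_nonpos (by linarith), abs_of_nonpos (by linarith)] at hstrict0
        linarith
      refine lt_of_le_of_lt (Finset.card_le_card ?_) hT
      intro j hj
      simp only [Finset.mem_filter, Finset.mem_univ, true_and] at hj ⊢
      have hji : istar < j := by
        rcases lt_trichotomy j istar with hlt | heq | hgt
        · exfalso
          have hcj : c j < c istar := hc hlt
          have e1 : |ℓ - c j| = ℓ - c j := abs_of_nonneg (by linarith)
          have e2 : |ℓ - c istar| = ℓ - c istar := abs_of_nonneg (by linarith)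
          rcases hj with h | ⟨h, _⟩ <;> rw [e1, e2] at h <;> linarith
        · exfalso
          subst heq
          rcases hj with h | ⟨_, h⟩
          · exact lt_irrefl _ h
          · exact lt_irrefl _ h
        · exact hgt
      have hcj : c istar < c j := hc hji
      have hstrict : |ℓ - c j| < |ℓ - c istar| := by
        rcases hj with h | ⟨h, hlt⟩
        · exact h
        · exact absurd hlt (not_lt.mpr hji.le)
      left
      have := absdiff_mono (c istar) (c j) ℓ T hlT hcj
      linarith
    · -- only lower-indexed candidates can be preferred at ℓ
      push_neg at hcase
      have hsub : (Finset.univ.filter fun j => prefers c ℓ j istar) ⊆ Finset.Iio istar := by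
        intro j hj
        simp only [Finset.mem_filter, Finset.mem_univ, true_and] at hj
        simp only [Finset.mem_Iio]
        rcases lt_trichotomy j istar with hlt | heq | hgt
        · exact hlt
        · exfalso
          subst heq
          rcases hj with h | ⟨_, h⟩
          · exact lt_irrefl _ h
          · exact lt_irrefl _ h
        · exact absurd hj (hcase j hgt)
      have hle := Finset.card_le_card hsub
      rw [Fin.card_Iio] at hle
      omega
  · -- right-half case
    intro T u hTu him hT
    simp only [topk, Finset.mem_filter, Finset.mem_univ, true_and] at hT ⊢
    by_cases hcase : ∃ j : Fin m, j < istar ∧ prefers c u j istar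
    · obtain ⟨j0, hj0, hp0⟩ := hcase
      have hcij : c j0 < c istar := hc hj0
      have hweak0 : |u - c j0| ≤ |u - c istar| := by
        rcases hp0 with h | ⟨h, _⟩
        · exact h.le
        · exact h.le
      have hcu : u < c istar := by
        by_contra hle
        push_neg at hle
        rw [abs_of_nonneg (by linarith), abs_of_nonneg (by linarith)] at hweak0
        rcases hp0 with h | ⟨h, _⟩
        · rw [abs_of_nonneg (by linarith), abs_of_nonneg (by linarith)] at h
          linarith
        · rw [abs_of_nonneg (by linarith), abs_of_nonneg (by linarith)] at h
          linarith
      refine lt_of_le_of_lt (Finset.card_le_card ?_) hT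
      intro j hj
      simp only [Finset.mem_filter, Finset.mem_univ, true_and] at hj ⊢
      have hji : j < istar := by
        rcases lt_trichotomy j istar with hlt | heq | hgt
        · exact hlt
        · exfalso
          subst heq
          rcases hj with h | ⟨_, h⟩
          · exact lt_irrefl _ h
          · exact lt_irrefl _ h
        · exfalso
          have hcj : c istar < c j := hc hgt
          have e1 : |u - c j| = c j - u := by rw [abs_of_nonpos (by linarith)]; ring
          have e2 : |u - c istar| = c istar - u := by rw [abs_of_nonpos (by linarith)]; ring
          rcases hj with h | ⟨h, hlt⟩
          · rw [e1, e2] at h; linarith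
          · exact absurd hlt (not_lt.mpr hgt.le)
      have hcj : c j < c istar := hc hji
      have hmono := absdiff_mono (c j) (c istar) T u hTu hcj
      -- hmono : |u - c istar| - |u - c j| ≤ |T - c istar| - |T - c j|
      rcases hj with h | ⟨h, _⟩
      · left; linarith
      · -- tie at u: at T either strictly closer or tied, and j < istar wins ties
        rcases lt_or_eq_of_le (show |T - c j| ≤ |T - c istar| by linarith) with h' | h'
        · exact Or.inl h'
        · exact Or.inr ⟨h', hji⟩
    · push_neg at hcase
      have hsub : (Finset.univ.filter fun j => prefers c u j istar) ⊆ Finset.Ioi istar := by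
        intro j hj
        simp only [Finset.mem_filter, Finset.mem_univ, true_and] at hj
        simp only [Finset.mem_Ioi]
        rcases lt_trichotomy j istar with hlt | heq | hgt
        · exact absurd hj (hcase j hlt)
        · exfalso
          subst heq
          rcases hj with h | ⟨_, h⟩
          · exact lt_irrefl _ h
          · exact lt_irrefl _ h
        · exact hgt
      have hle := Finset.card_le_card hsub
      rw [Fin.card_Ioi] at hle
      have hi := istar.isLt
      omega
end

section
/- Let k ≥ 2 and let a_1, …, a_n be positive integers with a_1 + ⋯ + a_n = 2A. Consider weighted k-approval spatial voting on ℝ with 2k + 1 candidates: candidates at positions 0, 1, …, k−1 (these are c_1, …, c_k), a candidate c* at position k, and candidates at positions k+1, …, 2k (these are c_{k+1}, …, c_{2k}); ties in distance are broken in favor of the candidate with smaller position. There are n + 2 voters: for each i ∈ {1, …, n}, voter i has interval [(k+1)/2, 3k/2] and weight a_i; voter n+1 has interval [−1, 0] and weight A; voter n+2 has interval [2k, 2k+1] and weight A. Then c* is a possible winner if and only if there is a subset S ⊆ {1, …, n} with Σ_{i∈S} a_i = A. -/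
namespace PW

open Finset

lemma card_le_of_val {m : ℕ} (s : Finset (Fin m)) (t : Finset ℕ)
    (h : ∀ j ∈ s, (j : ℕ) ∈ t) : s.card ≤ t.card :=
  Finset.card_le_card_of_injOn Fin.val h (Fin.val_injective.injOn)

lemma le_card_of_val {m : ℕ} (s : Finset (Fin m)) (t : Finset ℕ)
    (h : ∀ x ∈ t, ∃ j ∈ s, (j : ℕ) = x) : t.card ≤ s.card := by
  apply Finset.card_le_card_of_surjOn Fin.val
  intro x hx
  obtain ⟨j, hj, rfl⟩ := h x (by simpa using hx)
  exact ⟨j, by simpa using hj, rfl⟩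

lemma mem_topk {m : ℕ} (c : Fin m → ℝ) (T : ℝ) (K : ℕ) (i : Fin m) :
    i ∈ topk c T K ↔ (Finset.univ.filter fun j => prefers c T j i).card < K := by
  simp [topk]

lemma prefers_key {m : ℕ} {c : Fin m → ℝ} {T : ℝ} {j i : Fin m} (h : prefers c T j i) :
    |T - c j| ≤ |T - c i| ∧ (|T - c j| = |T - c i| → (j : ℕ) < (i : ℕ)) := by
  rcases h with h | ⟨h1, h2⟩
  · exact ⟨le_of_lt h, fun he => absurd h (by rw [he]; exact lt_irrefl _)⟩
  · exact ⟨le_of_eq h1, fun _ => h2⟩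

lemma mem_topk_of_bound {m K : ℕ} (c : Fin m → ℝ) (T : ℝ) (i : Fin m) (t : Finset ℕ)
    (hc : t.card < K) (h : ∀ j : Fin m, prefers c T j i → (j : ℕ) ∈ t) :
    i ∈ topk c T K := by
  rw [mem_topk]
  refine lt_of_le_of_lt (card_le_of_val _ t ?_) hc
  intro j hj
  exact h j (Finset.mem_filter.mp hj).2

lemma not_mem_topk_of_bound {m K : ℕ} (c : Fin m → ℝ) (T : ℝ) (i : Fin m) (t : Finset ℕ)
    (hc : K ≤ t.card) (h : ∀ x ∈ t, ∃ j : Fin m, prefers c T j i ∧ (j : ℕ) = x) :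
    i ∉ topk c T K := by
  rw [mem_topk]
  simp only [not_lt]
  refine le_trans hc (le_card_of_val _ t ?_)
  intro x hx
  obtain ⟨j, hj, rfl⟩ := h x hx
  exact ⟨j, Finset.mem_filter.mpr ⟨Finset.mem_univ _, hj⟩, rfl⟩

/-- Left voters: for `T ≤ 0`, top-k is `{0, …, k-1}`. -/
lemma topk_left {k : ℕ} (T : ℝ) (hT : T ≤ 0) (i : Fin (2*k+1)) :
    i ∈ topk (fun x : Fin (2*k+1) => ((x : ℕ) : ℝ)) T k ↔ (i : ℕ) < k := by
  rw [mem_topk]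
  have hpref : ∀ j : Fin (2*k+1),
      prefers (fun x : Fin (2*k+1) => ((x : ℕ) : ℝ)) T j i ↔ (j : ℕ) < (i : ℕ) := by
    intro j
    have haj : |T - ((j : ℕ) : ℝ)| = ((j : ℕ) : ℝ) - T := by
      rw [abs_of_nonpos (by have := Nat.cast_nonneg (α := ℝ) (j : ℕ); linarith)]; ring
    have hai : |T - ((i : ℕ) : ℝ)| = ((i : ℕ) : ℝ) - T := by
      rw [abs_of_nonpos (by have := Nat.cast_nonneg (α := ℝ) (i : ℕ); linarith)]; ring
    constructor
    · rintro (h | ⟨h1, h2⟩)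
      · simp only [haj, hai] at h
        exact_mod_cast (by linarith : ((j:ℕ):ℝ) < ((i:ℕ):ℝ))
      · exact h2
    · intro h
      left
      simp only [haj, hai]
      have : ((j:ℕ):ℝ) < ((i:ℕ):ℝ) := by exact_mod_cast h
      linarith
  have hfe : (Finset.univ.filter fun j => prefers (fun x : Fin (2*k+1) => ((x : ℕ) : ℝ)) T j i)
      = Finset.univ.filter fun j : Fin (2*k+1) => (j : ℕ) < (i : ℕ) := by
    ext j; simp [hpref]
  rw [hfe]
  have hcard : (Finset.univ.filter fun j : Fin (2*k+1) => (j : ℕ) < (i : ℕ)).card = (i : ℕ) := by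
    apply le_antisymm
    · refine le_trans (card_le_of_val _ (Finset.range (i : ℕ)) ?_) (le_of_eq (Finset.card_range _))
      intro j hj
      simp only [Finset.mem_filter] at hj
      simpa using hj.2
    · refine le_trans (le_of_eq (Finset.card_range _).symm) (le_card_of_val _ (Finset.range (i : ℕ)) ?_)
      intro x hx
      simp only [Finset.mem_range] at hx
      exact ⟨⟨x, by omega⟩, Finset.mem_filter.mpr ⟨Finset.mem_univ _, by simpa using hx⟩, rfl⟩
  rw [hcard]

/-- Right voters: for `2k ≤ T`, top-k is `{k+1, …, 2k}`. -/
lemma topk_right {k : ℕ} (T : ℝ) (hT : 2*(k:ℝ) ≤ T) (i : Fin (2*k+1)) :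
    i ∈ topk (fun x : Fin (2*k+1) => ((x : ℕ) : ℝ)) T k ↔ k < (i : ℕ) := by
  rw [mem_topk]
  have hge : ∀ j : Fin (2*k+1), ((j : ℕ) : ℝ) ≤ T := by
    intro j
    have : ((j:ℕ):ℝ) ≤ 2*(k:ℝ) := by
      have : (j:ℕ) ≤ 2*k := by omega
      exact_mod_cast this
    linarith
  have hpref : ∀ j : Fin (2*k+1),
      prefers (fun x : Fin (2*k+1) => ((x : ℕ) : ℝ)) T j i ↔ (i : ℕ) < (j : ℕ) := by
    intro j
    have haj : |T - ((j : ℕ) : ℝ)| = T - ((j : ℕ) : ℝ) := abs_of_nonneg (by linarith [hge j])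
    have hai : |T - ((i : ℕ) : ℝ)| = T - ((i : ℕ) : ℝ) := abs_of_nonneg (by linarith [hge i])
    constructor
    · rintro (h | ⟨h1, h2⟩)
      · simp only [haj, hai] at h
        exact_mod_cast (by linarith : ((i:ℕ):ℝ) < ((j:ℕ):ℝ))
      · simp only [haj, hai] at h1
        have : ((j:ℕ):ℝ) = ((i:ℕ):ℝ) := by linarith
        have : (j:ℕ) = (i:ℕ) := by exact_mod_cast this
        omega
    · intro h
      left
      simp only [haj, hai]
      have : ((i:ℕ):ℝ) < ((j:ℕ):ℝ) := by exact_mod_cast h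
      linarith
  have hfe : (Finset.univ.filter fun j => prefers (fun x : Fin (2*k+1) => ((x : ℕ) : ℝ)) T j i)
      = Finset.univ.filter fun j : Fin (2*k+1) => (i : ℕ) < (j : ℕ) := by
    ext j; simp [hpref]
  rw [hfe]
  have hcard : (Finset.univ.filter fun j : Fin (2*k+1) => (i : ℕ) < (j : ℕ)).card = 2*k - (i:ℕ) := by
    apply le_antisymm
    · refine le_trans (card_le_of_val _ (Finset.Ico ((i:ℕ)+1) (2*k+1)) ?_) ?_
      · intro j hj
        simp only [Finset.mem_filter] at hj
        simp only [Finset.mem_Ico]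
        omega
      · rw [Nat.card_Ico]; omega
    · refine le_trans ?_ (le_card_of_val _ (Finset.Ico ((i:ℕ)+1) (2*k+1)) ?_)
      · rw [Nat.card_Ico]; omega
      · intro x hx
        simp only [Finset.mem_Ico] at hx
        exact ⟨⟨x, by omega⟩, Finset.mem_filter.mpr ⟨Finset.mem_univ _, by simpa using hx.1⟩, rfl⟩
  rw [hcard]
  omega

/-- Generic membership lemma: if all preferred candidates lie in `[a,b] \ {i}`
(possibly also excluding `b`), of size `< k`, then `i` is in the top-k. -/
lemma mem_topk_G {k : ℕ} (T : ℝ) (i : Fin (2*k+1)) (a b : ℕ)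
    (ha : a ≤ (i : ℕ)) (hbi : (i : ℕ) ≤ b)
    (hlo : (a : ℝ) - 1 < T - |T - ((i : ℕ) : ℝ)|)
    (hhi : T + |T - ((i : ℕ) : ℝ)| < (b : ℝ) + 1)
    (hcard : b < a + k ∨ ((i : ℕ) < b ∧ T + |T - ((i : ℕ) : ℝ)| ≤ (b : ℝ) ∧ b ≤ a + k)) :
    i ∈ topk (fun x : Fin (2*k+1) => ((x : ℕ) : ℝ)) T k := by
  have hD0 : 0 ≤ |T - ((i : ℕ) : ℝ)| := abs_nonneg _
  have hmem : ∀ j : Fin (2*k+1), prefers (fun x : Fin (2*k+1) => ((x : ℕ) : ℝ)) T j i →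
      a ≤ (j : ℕ) ∧ (j : ℕ) ≤ b ∧ (j : ℕ) ≠ (i : ℕ) := by
    intro j hp
    obtain ⟨hle, htie⟩ := prefers_key hp
    have hb2 := abs_le.mp hle
    refine ⟨?_, ?_, ?_⟩
    · have : (a : ℝ) < ((j : ℕ) : ℝ) + 1 := by linarith [hb2.2]
      exact_mod_cast Nat.lt_add_one_iff.mp (by exact_mod_cast this)
    · have : ((j : ℕ) : ℝ) < (b : ℝ) + 1 := by linarith [hb2.1]
      exact_mod_cast Nat.lt_add_one_iff.mp (by exact_mod_cast this)
    · intro he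
      have : ((j : ℕ) : ℝ) = ((i : ℕ) : ℝ) := by exact_mod_cast he
      have h2 := htie (by rw [this])
      omega
  rcases hcard with hc | ⟨hib, hTb, hc⟩
  · apply mem_topk_of_bound _ _ _ ((Finset.Icc a b).erase (i : ℕ))
    · have h1 : (i : ℕ) ∈ Finset.Icc a b := Finset.mem_Icc.mpr ⟨ha, hbi⟩
      rw [Finset.card_erase_of_mem h1, Nat.card_Icc]
      omega
    · intro j hp
      obtain ⟨h1, h2, h3⟩ := hmem j hp
      exact Finset.mem_erase.mpr ⟨h3, Finset.mem_Icc.mpr ⟨h1, h2⟩⟩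
  · apply mem_topk_of_bound _ _ _ (((Finset.Icc a b).erase (i : ℕ)).erase b)
    · have h1 : (i : ℕ) ∈ Finset.Icc a b := Finset.mem_Icc.mpr ⟨ha, hbi⟩
      have h2 : b ∈ (Finset.Icc a b).erase (i : ℕ) :=
        Finset.mem_erase.mpr ⟨by omega, Finset.mem_Icc.mpr ⟨by omega, le_refl _⟩⟩
      rw [Finset.card_erase_of_mem h2, Finset.card_erase_of_mem h1, Nat.card_Icc]
      omega
    · intro j hp
      obtain ⟨h1, h2, h3⟩ := hmem j hp
      have hjb : (j : ℕ) ≠ b := by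
        intro he
        obtain ⟨hle, htie⟩ := prefers_key hp
        have hjR : ((j : ℕ) : ℝ) = (b : ℝ) := by exact_mod_cast he
        have hTle : T ≤ (b : ℝ) := by linarith
        have habs : |T - ((j : ℕ) : ℝ)| = (b : ℝ) - T := by
          rw [hjR, abs_of_nonpos (by linarith)]; ring
        have heq : |T - ((j : ℕ) : ℝ)| = |T - ((i : ℕ) : ℝ)| := by
          rw [habs] at hle ⊢
          have : |T - ((i : ℕ) : ℝ)| ≤ (b : ℝ) - T := by linarith
          linarith [le_antisymm hle (by linarith [hTb] : |T - ((i:ℕ):ℝ)| ≤ (b:ℝ) - T)]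
        have := htie heq
        omega
      exact Finset.mem_erase.mpr ⟨hjb, Finset.mem_erase.mpr ⟨h3, Finset.mem_Icc.mpr ⟨h1, h2⟩⟩⟩

/-- Generic non-membership lemma: `k` candidates in `[a,b]` all preferred over `i`. -/
lemma not_mem_topk_G {k : ℕ} (T : ℝ) (i : Fin (2*k+1)) (a b : ℕ) (hb : b ≤ 2*k)
    (hcard : k ≤ b + 1 - a)
    (h : ∀ x, a ≤ x → x ≤ b → ∀ (hx : x < 2*k+1),
      prefers (fun y : Fin (2*k+1) => ((y : ℕ) : ℝ)) T ⟨x, hx⟩ i) :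
    i ∉ topk (fun x : Fin (2*k+1) => ((x : ℕ) : ℝ)) T k := by
  apply not_mem_topk_of_bound _ _ _ (Finset.Icc a b)
  · rw [Nat.card_Icc]; omega
  · intro x hx
    rw [Finset.mem_Icc] at hx
    exact ⟨⟨x, by omega⟩, h x hx.1 hx.2 (by omega), rfl⟩

/-- Middle voters: every position in `[(k+1)/2, 3k/2]` approves `k-1` or `k+1`. -/
lemma topk_mid {k : ℕ} (hk : 2 ≤ k) (T : ℝ) (h1 : ((k:ℝ)+1)/2 ≤ T) (h2 : T ≤ 3*(k:ℝ)/2) :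
    (⟨k-1, by omega⟩ : Fin (2*k+1)) ∈ topk (fun x : Fin (2*k+1) => ((x : ℕ) : ℝ)) T k ∨
    (⟨k+1, by omega⟩ : Fin (2*k+1)) ∈ topk (fun x : Fin (2*k+1) => ((x : ℕ) : ℝ)) T k := by
  have hkR : (2:ℝ) ≤ (k:ℝ) := by exact_mod_cast hk
  have hc1 : ((k-1:ℕ):ℝ) = (k:ℝ)-1 := by rw [Nat.cast_sub (by omega)]; norm_num
  by_cases hTk : T ≤ (k:ℝ)
  · left
    have hDm : |T - ((k-1:ℕ):ℝ)| = |T - ((k:ℝ)-1)| := by rw [hc1]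
    by_cases hT1 : T ≤ (k:ℝ)-1
    · have hk3 : 3 ≤ k := by
        have : (3:ℝ) ≤ (k:ℝ) := by linarith
        exact_mod_cast this
      have hD : |T - ((k:ℝ)-1)| = ((k:ℝ)-1) - T := by
        rw [abs_of_nonpos (by linarith)]; ring
      refine mem_topk_G T _ 2 (k-1) (by show 2 ≤ k-1; omega) (le_refl _) ?_ ?_ (Or.inl (by omega))
      · show ((2:ℕ):ℝ) - 1 < T - |T - ((k-1:ℕ):ℝ)|
        rw [hDm, hD]
        push_cast
        linarith
      · show T + |T - ((k-1:ℕ):ℝ)| < ((k-1:ℕ):ℝ) + 1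
        rw [hDm, hD, hc1]
        linarith
    · have hD : |T - ((k:ℝ)-1)| = T - ((k:ℝ)-1) := by
        rw [abs_of_nonneg (by linarith)]
      refine mem_topk_G T _ (k-1) (k+1) (le_refl _) (by show k-1 ≤ k+1; omega) ?_ ?_
        (Or.inr ⟨by show k-1 < k+1; omega, ?_, by omega⟩)
      · show ((k-1:ℕ):ℝ) - 1 < T - |T - ((k-1:ℕ):ℝ)|
        rw [hDm, hD, hc1]
        linarith
      · show T + |T - ((k-1:ℕ):ℝ)| < ((k+1:ℕ):ℝ) + 1
        rw [hDm, hD]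
        push_cast
        linarith
      · show T + |T - ((k-1:ℕ):ℝ)| ≤ ((k+1:ℕ):ℝ)
        rw [hDm, hD]
        push_cast
        linarith
  · right
    push_neg at hTk
    by_cases hT1 : T ≤ (k:ℝ)+1
    · have hD : |T - ((k+1:ℕ):ℝ)| = ((k:ℝ)+1) - T := by
        push_cast
        rw [abs_of_nonpos (by linarith)]; ring
      refine mem_topk_G T _ k (k+1) (by show k ≤ k+1; omega) (le_refl _) ?_ ?_
        (Or.inl (by omega))
      · show ((k:ℕ):ℝ) - 1 < T - |T - ((k+1:ℕ):ℝ)|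
        rw [hD]
        linarith
      · show T + |T - ((k+1:ℕ):ℝ)| < ((k+1:ℕ):ℝ) + 1
        rw [hD]
        push_cast
        linarith
    · push_neg at hT1
      have hD : |T - ((k+1:ℕ):ℝ)| = T - ((k:ℝ)+1) := by
        push_cast
        rw [abs_of_nonneg (by linarith)]
      refine mem_topk_G T _ (k+1) (2*k-1) (le_refl _) (by show k+1 ≤ 2*k-1; omega) ?_ ?_
        (Or.inl (by omega))
      · show ((k+1:ℕ):ℝ) - 1 < T - |T - ((k+1:ℕ):ℝ)|
        rw [hD]
        push_cast
        linarith
      · show T + |T - ((k+1:ℕ):ℝ)| < ((2*k-1:ℕ):ℝ) + 1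
        rw [hD, Nat.cast_sub (by omega)]
        push_cast
        linarith

/-- At `T = (k+1)/2`, the top-k set is `{1, …, k}`. -/
lemma topk_T1 {k : ℕ} (hk : 2 ≤ k) (i : Fin (2*k+1)) :
    i ∈ topk (fun x : Fin (2*k+1) => ((x : ℕ) : ℝ)) (((k:ℝ)+1)/2) k ↔
      1 ≤ (i : ℕ) ∧ (i : ℕ) ≤ k := by
  have hkR : (2:ℝ) ≤ (k:ℝ) := by exact_mod_cast hk
  constructor
  · intro hm
    by_contra hcon
    have hcases : (i : ℕ) = 0 ∨ k+1 ≤ (i : ℕ) := by omega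
    have hD : ((k:ℝ)+1)/2 ≤ |((k:ℝ)+1)/2 - ((i:ℕ):ℝ)| := by
      rcases hcases with h | h
      · rw [h]
        simp only [Nat.cast_zero, sub_zero]
        rw [abs_of_nonneg (by positivity)]
      · have : ((k:ℝ)+1) ≤ ((i:ℕ):ℝ) := by exact_mod_cast h
        rw [abs_of_nonpos (by linarith)]
        linarith
    refine absurd hm (not_mem_topk_G _ i 1 k (by omega) (by omega) ?_)
    intro x hx1 hx2 hxlt
    left
    show |((k:ℝ)+1)/2 - ((x:ℕ):ℝ)| < |((k:ℝ)+1)/2 - ((i:ℕ):ℝ)|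
    have hx1R : (1:ℝ) ≤ ((x:ℕ):ℝ) := by exact_mod_cast hx1
    have hx2R : ((x:ℕ):ℝ) ≤ (k:ℝ) := by exact_mod_cast hx2
    have hxb : |((k:ℝ)+1)/2 - ((x:ℕ):ℝ)| ≤ ((k:ℝ)-1)/2 :=
      abs_le.mpr ⟨by linarith, by linarith⟩
    linarith
  · rintro ⟨hi1, hi2⟩
    have hi1R : (1:ℝ) ≤ ((i:ℕ):ℝ) := by exact_mod_cast hi1
    have hi2R : ((i:ℕ):ℝ) ≤ (k:ℝ) := by exact_mod_cast hi2
    by_cases hc : k+1 ≤ 2*(i:ℕ)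
    · have hcR : (k:ℝ)+1 ≤ 2*((i:ℕ):ℝ) := by exact_mod_cast hc
      have hD : |((k:ℝ)+1)/2 - ((i:ℕ):ℝ)| = ((i:ℕ):ℝ) - ((k:ℝ)+1)/2 := by
        rw [abs_of_nonpos (by linarith)]; ring
      have hcast : ((k+1-(i:ℕ) : ℕ):ℝ) = (k:ℝ)+1 - ((i:ℕ):ℝ) := by
        rw [Nat.cast_sub (by omega)]; push_cast; ring
      refine mem_topk_G _ i (k+1-(i:ℕ)) (i:ℕ) (by omega) (le_refl _) ?_ ?_
        (Or.inl (by omega))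
      · rw [hD, hcast]; linarith
      · rw [hD]; linarith
    · push_neg at hc
      have hcR : 2*((i:ℕ):ℝ) ≤ (k:ℝ) := by exact_mod_cast (by omega : 2*(i:ℕ) ≤ k)
      have hD : |((k:ℝ)+1)/2 - ((i:ℕ):ℝ)| = ((k:ℝ)+1)/2 - ((i:ℕ):ℝ) := by
        rw [abs_of_nonneg (by linarith)]
      have hcast : ((k+1-(i:ℕ) : ℕ):ℝ) = (k:ℝ)+1 - ((i:ℕ):ℝ) := by
        rw [Nat.cast_sub (by omega)]; push_cast; ring
      refine mem_topk_G _ i (i:ℕ) (k+1-(i:ℕ)) (le_refl _) (by omega) ?_ ?_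
        (Or.inl (by omega))
      · rw [hD]; linarith
      · rw [hD, hcast]; linarith

/-- At `T = 3k/2`, the top-k set is `{k, …, 2k-1}`. -/
lemma topk_T2 {k : ℕ} (hk : 2 ≤ k) (i : Fin (2*k+1)) :
    i ∈ topk (fun x : Fin (2*k+1) => ((x : ℕ) : ℝ)) (3*(k:ℝ)/2) k ↔
      k ≤ (i : ℕ) ∧ (i : ℕ) ≤ 2*k-1 := by
  have hkR : (2:ℝ) ≤ (k:ℝ) := by exact_mod_cast hk
  constructor
  · intro hm
    by_contra hcon
    have hcases : (i : ℕ) ≤ k-1 ∨ (i : ℕ) = 2*k := by omega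
    rcases hcases with h | h
    · have hiR : ((i:ℕ):ℝ) ≤ (k:ℝ)-1 := by
        have : ((i:ℕ):ℝ) ≤ ((k-1:ℕ):ℝ) := by exact_mod_cast h
        rw [Nat.cast_sub (by omega)] at this
        push_cast at this
        linarith
      have hD : (k:ℝ)/2 + 1 ≤ |3*(k:ℝ)/2 - ((i:ℕ):ℝ)| := by
        rw [abs_of_nonneg (by linarith)]
        linarith
      refine absurd hm (not_mem_topk_G _ i (k+1) (2*k) (by omega) (by omega) ?_)
      intro x hx1 hx2 hxlt
      left
      show |3*(k:ℝ)/2 - ((x:ℕ):ℝ)| < |3*(k:ℝ)/2 - ((i:ℕ):ℝ)|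
      have hx1R : (k:ℝ)+1 ≤ ((x:ℕ):ℝ) := by exact_mod_cast hx1
      have hx2R : ((x:ℕ):ℝ) ≤ 2*(k:ℝ) := by exact_mod_cast hx2
      have hxb : |3*(k:ℝ)/2 - ((x:ℕ):ℝ)| ≤ (k:ℝ)/2 :=
        abs_le.mpr ⟨by linarith, by linarith⟩
      linarith
    · have hiR : ((i:ℕ):ℝ) = 2*(k:ℝ) := by exact_mod_cast h
      refine absurd hm (not_mem_topk_G _ i k (2*k-1) (by omega) (by omega) ?_)
      intro x hx1 hx2 hxlt
      have hx2R : ((x:ℕ):ℝ) ≤ 2*(k:ℝ)-1 := by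
        have : ((x:ℕ):ℝ) ≤ ((2*k-1:ℕ):ℝ) := by exact_mod_cast hx2
        rw [Nat.cast_sub (by omega)] at this
        push_cast at this
        linarith
      have hDi : |3*(k:ℝ)/2 - ((i:ℕ):ℝ)| = (k:ℝ)/2 := by
        rw [hiR, abs_of_nonpos (by linarith)]; ring
      rcases Nat.eq_or_lt_of_le hx1 with he | hlt
      · right
        constructor
        · show |3*(k:ℝ)/2 - ((x:ℕ):ℝ)| = |3*(k:ℝ)/2 - ((i:ℕ):ℝ)|
          rw [hDi, ← he]
          rw [abs_of_nonneg (by push_cast; linarith)]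
          push_cast; ring
        · show (⟨x, hxlt⟩ : Fin (2*k+1)) < i
          rw [Fin.lt_def]
          show x < (i:ℕ)
          omega
      · left
        show |3*(k:ℝ)/2 - ((x:ℕ):ℝ)| < |3*(k:ℝ)/2 - ((i:ℕ):ℝ)|
        rw [hDi]
        have hx1R : (k:ℝ)+1 ≤ ((x:ℕ):ℝ) := by exact_mod_cast hlt
        have : |3*(k:ℝ)/2 - ((x:ℕ):ℝ)| ≤ (k:ℝ)/2 - 1 :=
          abs_le.mpr ⟨by linarith, by linarith⟩
        linarith
  · rintro ⟨hi1, hi2⟩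
    have hi1R : (k:ℝ) ≤ ((i:ℕ):ℝ) := by exact_mod_cast hi1
    have hi2R : ((i:ℕ):ℝ) ≤ 2*(k:ℝ)-1 := by
      have : ((i:ℕ):ℝ) ≤ ((2*k-1:ℕ):ℝ) := by exact_mod_cast hi2
      rw [Nat.cast_sub (by omega)] at this
      push_cast at this
      linarith
    have hcast : ((3*k-(i:ℕ) : ℕ):ℝ) = 3*(k:ℝ) - ((i:ℕ):ℝ) := by
      rw [Nat.cast_sub (by omega)]; push_cast; ring
    by_cases hc : 3*k ≤ 2*(i:ℕ)
    · have hcR : 3*(k:ℝ) ≤ 2*((i:ℕ):ℝ) := by exact_mod_cast hc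
      have hD : |3*(k:ℝ)/2 - ((i:ℕ):ℝ)| = ((i:ℕ):ℝ) - 3*(k:ℝ)/2 := by
        rw [abs_of_nonpos (by linarith)]; ring
      refine mem_topk_G _ i (3*k-(i:ℕ)) (i:ℕ) (by omega) (le_refl _) ?_ ?_
        (Or.inl (by omega))
      · rw [hD, hcast]; linarith
      · rw [hD]; linarith
    · push_neg at hc
      have hcR : 2*((i:ℕ):ℝ) ≤ 3*(k:ℝ) := by
        have : (2*(i:ℕ) : ℕ) ≤ 3*k := by omega
        exact_mod_cast this
      have hD : |3*(k:ℝ)/2 - ((i:ℕ):ℝ)| = 3*(k:ℝ)/2 - ((i:ℕ):ℝ) := by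
        rw [abs_of_nonneg (by linarith)]
      refine mem_topk_G _ i (i:ℕ) (3*k-(i:ℕ)) (le_refl _) (by omega) ?_ ?_
        (Or.inr ⟨by omega, ?_, by omega⟩)
      · rw [hD]; linarith
      · rw [hD, hcast]; linarith
      · rw [hD, hcast]; linarith

end PW

/-- Correctness of the PARTITION reduction for weighted `k`-approval (`k ≥ 2`) in one
dimension: candidates sit at positions `0, 1, …, 2k` (so candidate index equals its
position, with `c*` at position `k`); voters `1, …, n` have intervals
`[(k+1)/2, 3k/2]` and weights `a i`; one voter has interval `[−1, 0]` and weight `A`;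
one voter has interval `[2k, 2k+1]` and weight `A`. Then `c*` is a possible winner iff
some subset of the `a i` sums to `A`. -/
theorem kapproval_partition_reduction (k n A : ℕ) (hk : 2 ≤ k) (a : Fin n → ℕ)
    (hpos : ∀ i, 0 < a i) (hsum : ∑ i, a i = 2 * A) :
    (∃ T : Fin (n + 2) → ℝ,
        (∀ j : Fin (n + 2), T j ∈ Set.Icc
          (if (j : ℕ) < n then ((k : ℝ) + 1) / 2
            else if (j : ℕ) = n then (-1 : ℝ) else 2 * (k : ℝ))
          (if (j : ℕ) < n then 3 * (k : ℝ) / 2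
            else if (j : ℕ) = n then (0 : ℝ) else 2 * (k : ℝ) + 1)) ∧
        ∀ i : Fin (2 * k + 1),
          score (fun i : Fin (2 * k + 1) => ((i : ℕ) : ℝ)) k
              (fun j => if h : (j : ℕ) < n then (a ⟨j, h⟩ : ℝ) else (A : ℝ)) T i ≤
            score (fun i : Fin (2 * k + 1) => ((i : ℕ) : ℝ)) k
              (fun j => if h : (j : ℕ) < n then (a ⟨j, h⟩ : ℝ) else (A : ℝ)) T
              ⟨k, by omega⟩) ↔
      ∃ S : Finset (Fin n), ∑ i ∈ S, a i = A := by
  classical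
  have hkR : (2:ℝ) ≤ (k:ℝ) := by exact_mod_cast hk
  have hA0 : (0:ℝ) ≤ (A:ℝ) := Nat.cast_nonneg _
  have hsumR : (∑ i : Fin n, (a i : ℝ)) = 2*(A:ℝ) := by
    have h := congrArg (fun x : ℕ => (x:ℝ)) hsum
    push_cast at h
    exact h
  have pfk : k < 2*k+1 := by omega
  have pfkm : k-1 < 2*k+1 := by omega
  have pfkp : k+1 < 2*k+1 := by omega
  have pfn : n < n+2 := by omega
  have pfn1 : n+1 < n+2 := by omega
  have pfm : ∀ i : Fin n, (i:ℕ) < n+2 := fun i => by omega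
  have hsplit : ∀ f : Fin (n+2) → ℝ, (∑ j, f j) =
      (∑ i : Fin n, f ⟨(i:ℕ), pfm i⟩) + f ⟨n, pfn⟩ + f ⟨n+1, pfn1⟩ := by
    intro f
    rw [Fin.sum_univ_castSucc, Fin.sum_univ_castSucc]
    rfl
  have hWmid : ∀ i : Fin n,
      (fun j : Fin (n+2) => if h : (j : ℕ) < n then (a ⟨j, h⟩ : ℝ) else (A : ℝ)) ⟨(i:ℕ), pfm i⟩
        = (a i : ℝ) := fun i => by simp [i.isLt]
  have hWn : (fun j : Fin (n+2) => if h : (j : ℕ) < n then (a ⟨j, h⟩ : ℝ) else (A : ℝ)) ⟨n, pfn⟩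
      = (A:ℝ) := dif_neg (show ¬(n < n) by omega)
  have hWn1 : (fun j : Fin (n+2) => if h : (j : ℕ) < n then (a ⟨j, h⟩ : ℝ) else (A : ℝ)) ⟨n+1, pfn1⟩
      = (A:ℝ) := dif_neg (show ¬(n+1 < n) by omega)
  have hscore : ∀ (T : Fin (n+2) → ℝ) (ci : Fin (2*k+1)),
      score (fun i : Fin (2 * k + 1) => ((i : ℕ) : ℝ)) k
          (fun j => if h : (j : ℕ) < n then (a ⟨j, h⟩ : ℝ) else (A : ℝ)) T ci
      = (∑ i' : Fin n, if ci ∈ topk (fun i : Fin (2 * k + 1) => ((i : ℕ) : ℝ)) (T ⟨(i':ℕ), pfm i'⟩) k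
            then (a i' : ℝ) else 0)
        + (if ci ∈ topk (fun i : Fin (2 * k + 1) => ((i : ℕ) : ℝ)) (T ⟨n, pfn⟩) k then (A:ℝ) else 0)
        + (if ci ∈ topk (fun i : Fin (2 * k + 1) => ((i : ℕ) : ℝ)) (T ⟨n+1, pfn1⟩) k then (A:ℝ) else 0) := by
    intro T ci
    calc score (fun i : Fin (2 * k + 1) => ((i : ℕ) : ℝ)) k
          (fun j => if h : (j : ℕ) < n then (a ⟨j, h⟩ : ℝ) else (A : ℝ)) T ci
        = (∑ i' : Fin n, if ci ∈ topk (fun i : Fin (2 * k + 1) => ((i : ℕ) : ℝ)) (T ⟨(i':ℕ), pfm i'⟩) k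
              then (fun j : Fin (n+2) => if h : (j : ℕ) < n then (a ⟨j, h⟩ : ℝ) else (A : ℝ)) ⟨(i':ℕ), pfm i'⟩ else 0)
          + (if ci ∈ topk (fun i : Fin (2 * k + 1) => ((i : ℕ) : ℝ)) (T ⟨n, pfn⟩) k
              then (fun j : Fin (n+2) => if h : (j : ℕ) < n then (a ⟨j, h⟩ : ℝ) else (A : ℝ)) ⟨n, pfn⟩ else 0)
          + (if ci ∈ topk (fun i : Fin (2 * k + 1) => ((i : ℕ) : ℝ)) (T ⟨n+1, pfn1⟩) k
              then (fun j : Fin (n+2) => if h : (j : ℕ) < n then (a ⟨j, h⟩ : ℝ) else (A : ℝ)) ⟨n+1, pfn1⟩ else 0) :=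
        hsplit _
      _ = _ := by
        rw [hWn, hWn1]
        congr 1
        congr 1
        exact Finset.sum_congr rfl fun i' _ => by rw [hWmid i']
  constructor
  · rintro ⟨T, hTb, hopt⟩
    have hTn : T ⟨n, pfn⟩ ≤ 0 := by
      have h := (hTb ⟨n, pfn⟩).2
      rwa [if_neg (show ¬(n < n) by omega), if_pos (show n = n from rfl)] at h
    have hTn1 : 2*(k:ℝ) ≤ T ⟨n+1, pfn1⟩ := by
      have h := (hTb ⟨n+1, pfn1⟩).1
      rwa [if_neg (show ¬(n+1 < n) by omega), if_neg (show ¬(n+1 = n) by omega)] at h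
    have hTmid : ∀ i' : Fin n, ((k:ℝ)+1)/2 ≤ T ⟨(i':ℕ), pfm i'⟩ ∧ T ⟨(i':ℕ), pfm i'⟩ ≤ 3*(k:ℝ)/2 := by
      intro i'
      have h1 := (hTb ⟨(i':ℕ), pfm i'⟩).1
      have h2 := (hTb ⟨(i':ℕ), pfm i'⟩).2
      rw [if_pos (show (i':ℕ) < n from i'.isLt)] at h1
      rw [if_pos (show (i':ℕ) < n from i'.isLt)] at h2
      exact ⟨h1, h2⟩
    have hcu : score (fun i : Fin (2 * k + 1) => ((i : ℕ) : ℝ)) k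
        (fun j => if h : (j : ℕ) < n then (a ⟨j, h⟩ : ℝ) else (A : ℝ)) T ⟨k, pfk⟩ ≤ 2*(A:ℝ) := by
      rw [hscore]
      rw [if_neg (show (⟨k, pfk⟩ : Fin (2*k+1)) ∉ topk (fun i : Fin (2 * k + 1) => ((i : ℕ) : ℝ)) (T ⟨n, pfn⟩) k from
        fun hmem => absurd ((PW.topk_left _ hTn _).mp hmem) (show ¬(k < k) by omega))]
      rw [if_neg (show (⟨k, pfk⟩ : Fin (2*k+1)) ∉ topk (fun i : Fin (2 * k + 1) => ((i : ℕ) : ℝ)) (T ⟨n+1, pfn1⟩) k from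
        fun hmem => absurd ((PW.topk_right _ hTn1 _).mp hmem) (show ¬(k < k) by omega))]
      have hble : (∑ i' : Fin n, if (⟨k, pfk⟩ : Fin (2*k+1)) ∈ topk (fun i : Fin (2 * k + 1) => ((i : ℕ) : ℝ)) (T ⟨(i':ℕ), pfm i'⟩) k
            then (a i' : ℝ) else 0) ≤ ∑ i' : Fin n, (a i' : ℝ) := by
        apply Finset.sum_le_sum
        intro i' _
        split
        · exact le_refl _
        · exact Nat.cast_nonneg _
      linarith [hble, hsumR.le, hsumR.ge]
    have hopt' : ∀ ci, score (fun i : Fin (2 * k + 1) => ((i : ℕ) : ℝ)) k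
        (fun j => if h : (j : ℕ) < n then (a ⟨j, h⟩ : ℝ) else (A : ℝ)) T ci ≤ 2*(A:ℝ) :=
      fun ci => le_trans (hopt ci) hcu
    have hSlow : (∑ i' ∈ Finset.univ.filter (fun i' : Fin n => (⟨k-1, pfkm⟩ : Fin (2*k+1)) ∈ topk (fun i : Fin (2 * k + 1) => ((i : ℕ) : ℝ)) (T ⟨(i':ℕ), pfm i'⟩) k), (a i' : ℝ)) + A ≤
        score (fun i : Fin (2 * k + 1) => ((i : ℕ) : ℝ)) k (fun j => if h : (j : ℕ) < n then (a ⟨j, h⟩ : ℝ) else (A : ℝ)) T ⟨k-1, pfkm⟩ := by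
      rw [hscore]
      rw [if_pos ((PW.topk_left _ hTn (⟨k-1, pfkm⟩ : Fin (2*k+1))).mpr (show k-1 < k by omega))]
      have e2 : (0:ℝ) ≤ (if (⟨k-1, pfkm⟩ : Fin (2*k+1)) ∈ topk (fun i : Fin (2 * k + 1) => ((i : ℕ) : ℝ)) (T ⟨n+1, pfn1⟩) k then (A:ℝ) else 0) := by
        split
        · exact hA0
        · exact le_rfl
      have e3 : (∑ i' ∈ Finset.univ.filter (fun i' : Fin n => (⟨k-1, pfkm⟩ : Fin (2*k+1)) ∈ topk (fun i : Fin (2 * k + 1) => ((i : ℕ) : ℝ)) (T ⟨(i':ℕ), pfm i'⟩) k), (a i' : ℝ)) ≤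
          ∑ i' : Fin n, (if (⟨k-1, pfkm⟩ : Fin (2*k+1)) ∈ topk (fun i : Fin (2 * k + 1) => ((i : ℕ) : ℝ)) (T ⟨(i':ℕ), pfm i'⟩) k then (a i' : ℝ) else 0) := by
        have step1 : ∀ i' ∈ Finset.univ.filter (fun i' : Fin n => (⟨k-1, pfkm⟩ : Fin (2*k+1)) ∈ topk (fun i : Fin (2 * k + 1) => ((i : ℕ) : ℝ)) (T ⟨(i':ℕ), pfm i'⟩) k),
            (a i' : ℝ) = (if (⟨k-1, pfkm⟩ : Fin (2*k+1)) ∈ topk (fun i : Fin (2 * k + 1) => ((i : ℕ) : ℝ)) (T ⟨(i':ℕ), pfm i'⟩) k then (a i' : ℝ) else 0) := by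
          intro i' hi'
          rw [if_pos (Finset.mem_filter.mp hi').2]
        rw [Finset.sum_congr rfl step1]
        apply Finset.sum_le_sum_of_subset_of_nonneg (Finset.subset_univ _)
        intro i' _ _
        split
        · exact Nat.cast_nonneg _
        · exact le_rfl
      linarith [e2, e3]
    have hSclow : (∑ i' ∈ Finset.univ.filter (fun i' : Fin n => ¬ (⟨k-1, pfkm⟩ : Fin (2*k+1)) ∈ topk (fun i : Fin (2 * k + 1) => ((i : ℕ) : ℝ)) (T ⟨(i':ℕ), pfm i'⟩) k), (a i' : ℝ)) + A ≤
        score (fun i : Fin (2 * k + 1) => ((i : ℕ) : ℝ)) k (fun j => if h : (j : ℕ) < n then (a ⟨j, h⟩ : ℝ) else (A : ℝ)) T ⟨k+1, pfkp⟩ := by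
      rw [hscore]
      rw [if_pos ((PW.topk_right _ hTn1 (⟨k+1, pfkp⟩ : Fin (2*k+1))).mpr (show k < k+1 by omega))]
      have e2 : (0:ℝ) ≤ (if (⟨k+1, pfkp⟩ : Fin (2*k+1)) ∈ topk (fun i : Fin (2 * k + 1) => ((i : ℕ) : ℝ)) (T ⟨n, pfn⟩) k then (A:ℝ) else 0) := by
        split
        · exact hA0
        · exact le_rfl
      have e3 : (∑ i' ∈ Finset.univ.filter (fun i' : Fin n => ¬ (⟨k-1, pfkm⟩ : Fin (2*k+1)) ∈ topk (fun i : Fin (2 * k + 1) => ((i : ℕ) : ℝ)) (T ⟨(i':ℕ), pfm i'⟩) k), (a i' : ℝ)) ≤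
          ∑ i' : Fin n, (if (⟨k+1, pfkp⟩ : Fin (2*k+1)) ∈ topk (fun i : Fin (2 * k + 1) => ((i : ℕ) : ℝ)) (T ⟨(i':ℕ), pfm i'⟩) k then (a i' : ℝ) else 0) := by
        have step1 : ∀ i' ∈ Finset.univ.filter (fun i' : Fin n => ¬ (⟨k-1, pfkm⟩ : Fin (2*k+1)) ∈ topk (fun i : Fin (2 * k + 1) => ((i : ℕ) : ℝ)) (T ⟨(i':ℕ), pfm i'⟩) k),
            (a i' : ℝ) = (if (⟨k+1, pfkp⟩ : Fin (2*k+1)) ∈ topk (fun i : Fin (2 * k + 1) => ((i : ℕ) : ℝ)) (T ⟨(i':ℕ), pfm i'⟩) k then (a i' : ℝ) else 0) := by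
          intro i' hi'
          rw [if_pos ((PW.topk_mid hk _ (hTmid i').1 (hTmid i').2).resolve_left (Finset.mem_filter.mp hi').2)]
        rw [Finset.sum_congr rfl step1]
        apply Finset.sum_le_sum_of_subset_of_nonneg (Finset.subset_univ _)
        intro i' _ _
        split
        · exact Nat.cast_nonneg _
        · exact le_rfl
      linarith [e2, e3]
    have hS1 : (∑ i' ∈ Finset.univ.filter (fun i' : Fin n => (⟨k-1, pfkm⟩ : Fin (2*k+1)) ∈ topk (fun i : Fin (2 * k + 1) => ((i : ℕ) : ℝ)) (T ⟨(i':ℕ), pfm i'⟩) k), (a i' : ℝ)) ≤ A := by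
      have h := hopt' ⟨k-1, pfkm⟩
      linarith [hSlow]
    have hS2 : (∑ i' ∈ Finset.univ.filter (fun i' : Fin n => ¬ (⟨k-1, pfkm⟩ : Fin (2*k+1)) ∈ topk (fun i : Fin (2 * k + 1) => ((i : ℕ) : ℝ)) (T ⟨(i':ℕ), pfm i'⟩) k), (a i' : ℝ)) ≤ A := by
      have h := hopt' ⟨k+1, pfkp⟩
      linarith [hSclow]
    have hS3 : (∑ i' ∈ Finset.univ.filter (fun i' : Fin n => (⟨k-1, pfkm⟩ : Fin (2*k+1)) ∈ topk (fun i : Fin (2 * k + 1) => ((i : ℕ) : ℝ)) (T ⟨(i':ℕ), pfm i'⟩) k), (a i' : ℝ))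
        + (∑ i' ∈ Finset.univ.filter (fun i' : Fin n => ¬ (⟨k-1, pfkm⟩ : Fin (2*k+1)) ∈ topk (fun i : Fin (2 * k + 1) => ((i : ℕ) : ℝ)) (T ⟨(i':ℕ), pfm i'⟩) k), (a i' : ℝ)) = 2*(A:ℝ) := by
      rw [← hsumR]
      exact Finset.sum_filter_add_sum_filter_not _ _ _
    refine ⟨Finset.univ.filter (fun i' : Fin n => (⟨k-1, pfkm⟩ : Fin (2*k+1)) ∈ topk (fun i : Fin (2 * k + 1) => ((i : ℕ) : ℝ)) (T ⟨(i':ℕ), pfm i'⟩) k), ?_⟩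
    have h4 : (∑ i' ∈ Finset.univ.filter (fun i' : Fin n => (⟨k-1, pfkm⟩ : Fin (2*k+1)) ∈ topk (fun i : Fin (2 * k + 1) => ((i : ℕ) : ℝ)) (T ⟨(i':ℕ), pfm i'⟩) k), (a i' : ℝ)) = (A:ℝ) := by linarith
    have h5 : ((∑ i' ∈ Finset.univ.filter (fun i' : Fin n => (⟨k-1, pfkm⟩ : Fin (2*k+1)) ∈ topk (fun i : Fin (2 * k + 1) => ((i : ℕ) : ℝ)) (T ⟨(i':ℕ), pfm i'⟩) k), a i' : ℕ) : ℝ) = (A:ℝ) := by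
      push_cast
      exact h4
    exact_mod_cast h5
  · rintro ⟨S, hSA⟩
    have hScA : ∑ i' ∈ Finset.univ.filter (fun i' : Fin n => ¬ i' ∈ S), a i' = A := by
      have h := Finset.sum_filter_add_sum_filter_not Finset.univ (fun i' : Fin n => i' ∈ S) a
      have hfe : Finset.univ.filter (fun i' : Fin n => i' ∈ S) = S := by
        ext x
        simp
      rw [hfe, hSA, hsum] at h
      omega
    set Tf : Fin (n+2) → ℝ := fun j => if h : (j : ℕ) < n then
        (if (⟨(j:ℕ), h⟩ : Fin n) ∈ S then ((k:ℝ)+1)/2 else 3*(k:ℝ)/2)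
      else if (j:ℕ) = n then (0:ℝ) else 2*(k:ℝ) with hTf
    have hT0 : Tf ⟨n, pfn⟩ = (0:ℝ) := by
      rw [hTf]
      exact (dif_neg (show ¬(n < n) by omega)).trans (if_pos rfl)
    have hT1 : Tf ⟨n+1, pfn1⟩ = 2*(k:ℝ) := by
      rw [hTf]
      exact (dif_neg (show ¬(n+1 < n) by omega)).trans (if_neg (show ¬(n+1 = n) by omega))
    have hTm : ∀ i' : Fin n, Tf ⟨(i':ℕ), pfm i'⟩ = (if i' ∈ S then ((k:ℝ)+1)/2 else 3*(k:ℝ)/2) := by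
      intro i'
      rw [hTf]
      exact dif_pos i'.isLt
    have hsumS : ∀ ci : Fin (2*k+1),
        (∑ i' : Fin n, if ci ∈ topk (fun i : Fin (2 * k + 1) => ((i : ℕ) : ℝ)) (if i' ∈ S then ((k:ℝ)+1)/2 else 3*(k:ℝ)/2) k then (a i' : ℝ) else 0)
        = (if 1 ≤ (ci:ℕ) ∧ (ci:ℕ) ≤ k then (A:ℝ) else 0)
          + (if k ≤ (ci:ℕ) ∧ (ci:ℕ) ≤ 2*k-1 then (A:ℝ) else 0) := by
      intro ci
      rw [← Finset.sum_filter_add_sum_filter_not Finset.univ (fun i' : Fin n => i' ∈ S)]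
      congr 1
      · by_cases hc : 1 ≤ (ci:ℕ) ∧ (ci:ℕ) ≤ k
        · rw [if_pos hc]
          have step1 : ∀ i' ∈ Finset.univ.filter (fun i' : Fin n => i' ∈ S),
              (if ci ∈ topk (fun i : Fin (2 * k + 1) => ((i : ℕ) : ℝ)) (if i' ∈ S then ((k:ℝ)+1)/2 else 3*(k:ℝ)/2) k then (a i' : ℝ) else 0) = (a i' : ℝ) := by
            intro i' hi'
            rw [if_pos (Finset.mem_filter.mp hi').2, if_pos ((PW.topk_T1 hk ci).mpr hc)]
          rw [Finset.sum_congr rfl step1]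
          rw [show Finset.univ.filter (fun i' : Fin n => i' ∈ S) = S from by ext x; simp]
          rw [← Nat.cast_sum, hSA]
        · rw [if_neg hc]
          refine Finset.sum_eq_zero ?_
          intro i' hi'
          rw [if_pos (Finset.mem_filter.mp hi').2]
          exact if_neg (fun hmem => hc ((PW.topk_T1 hk ci).mp hmem))
      · by_cases hc : k ≤ (ci:ℕ) ∧ (ci:ℕ) ≤ 2*k-1
        · rw [if_pos hc]
          have step1 : ∀ i' ∈ Finset.univ.filter (fun i' : Fin n => ¬ i' ∈ S),
              (if ci ∈ topk (fun i : Fin (2 * k + 1) => ((i : ℕ) : ℝ)) (if i' ∈ S then ((k:ℝ)+1)/2 else 3*(k:ℝ)/2) k then (a i' : ℝ) else 0) = (a i' : ℝ) := by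
            intro i' hi'
            rw [if_neg (Finset.mem_filter.mp hi').2, if_pos ((PW.topk_T2 hk ci).mpr hc)]
          rw [Finset.sum_congr rfl step1]
          rw [← Nat.cast_sum, hScA]
        · rw [if_neg hc]
          refine Finset.sum_eq_zero ?_
          intro i' hi'
          rw [if_neg (Finset.mem_filter.mp hi').2]
          exact if_neg (fun hmem => hc ((PW.topk_T2 hk ci).mp hmem))
    refine ⟨Tf, ?_, ?_⟩
    · intro j
      rw [Set.mem_Icc, hTf]
      by_cases h : (j:ℕ) < n
      · simp only [if_pos h, dif_pos h]
        split
        · constructor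
          · exact le_rfl
          · linarith
        · constructor
          · linarith
          · exact le_rfl
      · by_cases h2 : (j:ℕ) = n
        · simp only [if_neg h, dif_neg h, if_pos h2]
          constructor
          · linarith
          · exact le_rfl
        · simp only [if_neg h, dif_neg h, if_neg h2]
          constructor
          · exact le_rfl
          · linarith
    · intro ci
      have hmain : score (fun i : Fin (2 * k + 1) => ((i : ℕ) : ℝ)) k (fun j => if h : (j : ℕ) < n then (a ⟨j, h⟩ : ℝ) else (A : ℝ)) Tf ci ≤ score (fun i : Fin (2 * k + 1) => ((i : ℕ) : ℝ)) k (fun j => if h : (j : ℕ) < n then (a ⟨j, h⟩ : ℝ) else (A : ℝ)) Tf ⟨k, pfk⟩ := by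
        rw [hscore, hscore]
        rw [hT0, hT1]
        simp only [hTm]
        rw [hsumS ci, hsumS ⟨k, pfk⟩]
        have hL : ∀ cj : Fin (2*k+1),
            (if cj ∈ topk (fun i : Fin (2 * k + 1) => ((i : ℕ) : ℝ)) (0:ℝ) k then (A:ℝ) else 0) = (if (cj:ℕ) < k then (A:ℝ) else 0) :=
          fun cj => if_congr (PW.topk_left (0:ℝ) le_rfl cj) rfl rfl
        have hR : ∀ cj : Fin (2*k+1),
            (if cj ∈ topk (fun i : Fin (2 * k + 1) => ((i : ℕ) : ℝ)) (2*(k:ℝ)) k then (A:ℝ) else 0) = (if k < (cj:ℕ) then (A:ℝ) else 0) :=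
          fun cj => if_congr (PW.topk_right (2*(k:ℝ)) le_rfl cj) rfl rfl
        rw [hL ci, hR ci, hL ⟨k, pfk⟩, hR ⟨k, pfk⟩]
        have hv : ((⟨k, pfk⟩ : Fin (2*k+1)) : ℕ) = k := rfl
        simp only [hv]
        split_ifs <;> first | omega | linarith
      exact hmain
end

section
/- Consider a shapes scheduling instance with a finite set J of jobs, common processing time P ≥ 1, and for each job j: a release time r_j ∈ ℕ, a deadline d_j ∈ ℕ with r_j + P ≤ d_j, and for each t with r_j ≤ t ≤ d_j − P a finite set ℋ_t^{(j)} ⊆ ℕ^P of shapes. Assume the instance is P-structured: there are global shape sets ℋ_t (t ∈ ℕ) with ℋ_t^{(j)} = ℋ_t whenever r_j < t < d_j − P, ℋ_{r_j}^{(j)} ⊆ ℋ_{r_j} and ℋ_{d_j−P}^{(j)} ⊆ ℋ_{d_j−P} for every j, and there is a total order ⪯ on J such that j ≺ j' implies d_j < d_{j'}, or d_j = d_{j'} and ℋ_{d_j−P}^{(j)} ⊆ ℋ_{d_{j'}−P}^{(j')}. Let j' be the ⪯-maximum job. If there is a feasible schedule (S, f) (i.e., r_j ≤ S_j ≤ d_j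 − P and f_j ∈ ℋ_{S_j}^{(j)} for all j), then there is a feasible schedule (S', f') with the same machine-usage function, i.e., M_{S',f'}(t) = M_{S,f}(t) for every t ∈ ℕ, such that every job j with r_j < S'_{j'} satisfies S'_j ≤ S'_{j'}, and every job j with r_j ≥ S'_{j'} satisfies S'_j ≥ S'_{j'}. -/
/-- The machine-usage function of a schedule: `usage S f t` is the total number of
machines occupied during the time slot `[t, t+1)`, where job `j` started at `S j` with
shape `f j` occupies `f j (t - S j)` machines during `[S j + i, S j + i + 1)`. -/
def usage {J : Type*} [Fintype J] {P : ℕ} (S : J → ℕ) (f : J → Fin P → ℕ) (t : ℕ) : ℕ :=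
  ∑ j, if h : S j ≤ t ∧ t < S j + P then f j ⟨t - S j, by omega⟩ else 0

/-- Exchange lemma for `P`-structured shapes scheduling: any feasible schedule can be
rearranged, without changing the machine-usage function, so that relative to the start
time of the `⪯`-maximum job `jmax`, all jobs released before it start no later than it,
and all jobs released at or after it start no earlier than it. -/
theorem shapes_scheduling_exchange {J : Type*} [Fintype J] [LinearOrder J]
    (P : ℕ) (hP : 1 ≤ P) (r d : J → ℕ) (hrd : ∀ j, r j + P ≤ d j)
    (H : J → ℕ → Finset (Fin P → ℕ)) (Hglob : ℕ → Finset (Fin P → ℕ))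
    (hmid : ∀ j t, r j < t → t < d j - P → H j t = Hglob t)
    (hrel : ∀ j, H j (r j) ⊆ Hglob (r j))
    (hdl : ∀ j, H j (d j - P) ⊆ Hglob (d j - P))
    (horder : ∀ j j' : J, j < j' →
      d j < d j' ∨ (d j = d j' ∧ H j (d j - P) ⊆ H j' (d j' - P)))
    (jmax : J) (hjmax : ∀ j, j ≤ jmax)
    (S : J → ℕ) (f : J → Fin P → ℕ)
    (hfeas : ∀ j, r j ≤ S j ∧ S j ≤ d j - P ∧ f j ∈ H j (S j)) :
    ∃ (S' : J → ℕ) (f' : J → Fin P → ℕ),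
      (∀ j, r j ≤ S' j ∧ S' j ≤ d j - P ∧ f' j ∈ H j (S' j)) ∧
      (∀ t, usage S' f' t = usage S f t) ∧
      (∀ j, r j < S' jmax → S' j ≤ S' jmax) ∧
      (∀ j, S' jmax ≤ r j → S' jmax ≤ S' j) := by
  -- any feasible shape is in the global shape set
  have hsub : ∀ (j : J) (t : ℕ), r j ≤ t → t ≤ d j - P → H j t ⊆ Hglob t := by
    intro j t h1 h2
    rcases eq_or_lt_of_le h1 with h | h
    · rw [← h]; exact hrel j
    · rcases eq_or_lt_of_le h2 with h' | h'
      · rw [h']; exact hdl j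
      · rw [hmid j t h h']
  suffices key : ∀ n (S : J → ℕ) (f : J → Fin P → ℕ),
      d jmax - P - S jmax ≤ n →
      (∀ j, r j ≤ S j ∧ S j ≤ d j - P ∧ f j ∈ H j (S j)) →
      ∃ (S' : J → ℕ) (f' : J → Fin P → ℕ),
        (∀ j, r j ≤ S' j ∧ S' j ≤ d j - P ∧ f' j ∈ H j (S' j)) ∧
        (∀ t, usage S' f' t = usage S f t) ∧
        (∀ j, r j < S' jmax → S' j ≤ S' jmax) by
    obtain ⟨S', f', h1, h2, h3⟩ := key (d jmax - P - S jmax) S f le_rfl hfeas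
    exact ⟨S', f', h1, h2, h3, fun j hj => le_trans hj (h1 j).1⟩
  intro n
  induction n using Nat.strong_induction_on with
  | _ n ih =>
    intro S f hn hf
    by_cases hgood : ∀ j, r j < S jmax → S j ≤ S jmax
    · exact ⟨S, f, hf, fun t => rfl, hgood⟩
    push_neg at hgood
    obtain ⟨j, hrj, hSj⟩ := hgood
    have hjne : j ≠ jmax := by
      intro h; rw [h] at hSj; exact lt_irrefl _ hSj
    have hjlt : j < jmax := lt_of_le_of_ne (hjmax j) hjne
    have hPd : P ≤ d j := le_trans (Nat.le_add_left P (r j)) (hrd j)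
    have hPdm : P ≤ d jmax := le_trans (Nat.le_add_left P (r jmax)) (hrd jmax)
    obtain ⟨hr1, hd1, hH1⟩ := hf j
    obtain ⟨hr2, hd2, hH2⟩ := hf jmax
    have hSj_le : S j ≤ d jmax - P := by
      rcases horder j jmax hjlt with h | ⟨h, _⟩
      · omega
      · omega
    set σ := Equiv.swap j jmax with hσ
    have hσj : σ j = jmax := Equiv.swap_apply_left j jmax
    have hσm : σ jmax = j := Equiv.swap_apply_right j jmax
    have hfeas' : ∀ i, r i ≤ (S ∘ σ) i ∧ (S ∘ σ) i ≤ d i - P ∧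
        (f ∘ σ) i ∈ H i ((S ∘ σ) i) := by
      intro i
      rcases eq_or_ne i j with rfl | hij
      · show r i ≤ S (σ i) ∧ S (σ i) ≤ d i - P ∧ f (σ i) ∈ H i (S (σ i))
        rw [hσj]
        refine ⟨le_of_lt hrj, by omega, ?_⟩
        rw [hmid i (S jmax) hrj (by omega)]
        exact hsub jmax (S jmax) hr2 hd2 hH2
      rcases eq_or_ne i jmax with rfl | him
      · show r i ≤ S (σ i) ∧ S (σ i) ≤ d i - P ∧ f (σ i) ∈ H i (S (σ i))
        rw [hσm]
        refine ⟨by omega, hSj_le, ?_⟩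
        rcases lt_or_eq_of_le hSj_le with h | h
        · rw [hmid i (S j) (by omega) h]
          exact hsub j (S j) hr1 hd1 hH1
        · rcases horder j i hjlt with h' | ⟨h', hsub'⟩
          · omega
          · rw [h]
            have hdp : d j - P = S j := by omega
            exact hsub' (by rwa [hdp])
      · show r i ≤ S (σ i) ∧ S (σ i) ≤ d i - P ∧ f (σ i) ∈ H i (S (σ i))
        rw [Equiv.swap_apply_of_ne_of_ne hij him]
        exact hf i
    have husage : ∀ t, usage (S ∘ σ) (f ∘ σ) t = usage S f t := by
      intro t
      unfold usage
      exact Fintype.sum_equiv σ _ _ (fun i => rfl)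
    have hmeas : d jmax - P - (S ∘ σ) jmax < n := by
      show d jmax - P - S (σ jmax) < n
      rw [hσm]
      omega
    obtain ⟨S', f', h1, h2, h3⟩ :=
      ih (d jmax - P - (S ∘ σ) jmax) hmeas (S ∘ σ) (f ∘ σ) le_rfl hfeas'
    refine ⟨S', f', h1, fun t => ?_, h3⟩
    rw [h2 t, husage t]
end

section
/- Let G be a simple graph with vertex set V of size n and edge set {e_1, …, e_m}, with no isolated vertices, and let k ≤ n. For each vertex v define the 0/1 vector f^(v) of length n + m − k by: coordinate i equals 1 for 1 ≤ i ≤ m if and only if edge e_i is incident to v, and coordinates m+1, …, n+m−k equal 0. For each i ∈ {1, …, n−k} define the dummy vector g^(i) of length n + m − k whose only 1 is at coordinate m + i. Then G has an independent set of size k if and only if there is a function h assigning to each of n jobs a vector from {f^(v) : v ∈ V} ∪ {g^(1), …, g^(n−k)} such that for every coordinate t ∈ {1, …, n+m−k}, the sum over the n jobs of coordinate t of their assigned vectors is at most 1. -/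
/-- The edge-incidence shape of a vertex `v`: a 0/1 vector of length `m + (n − k)`
whose `i`-th coordinate (for `i < m`) is 1 iff edge `e i` is incident to `v`, with all
dummy coordinates 0. -/
def vertexShape {V : Type*} [DecidableEq V] (n m k : ℕ) (e : Fin m → Sym2 V)
    (v : V) : Fin (m + (n - k)) → ℕ :=
  fun t => if h : (t : ℕ) < m then (if v ∈ e ⟨t, h⟩ then 1 else 0) else 0

/-- The `i`-th dummy shape: a 0/1 vector of length `m + (n − k)` whose only 1 is at
coordinate `m + i`. -/
def dummyShape (n m k : ℕ) (i : Fin (n - k)) : Fin (m + (n - k)) → ℕ :=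
  fun t => if (t : ℕ) = m + (i : ℕ) then 1 else 0

private lemma sum_le_one_aux {α : Type*} [Fintype α] [DecidableEq α] (f : α → ℕ)
    (h1 : ∀ a, f a ≤ 1) (h2 : ∀ a b, f a ≠ 0 → f b ≠ 0 → a = b) :
    ∑ a, f a ≤ 1 := by
  classical
  calc ∑ a, f a = ∑ a ∈ Finset.univ.filter (fun a => f a ≠ 0), f a :=
        (Finset.sum_filter_ne_zero _).symm
    _ ≤ ∑ _a ∈ Finset.univ.filter (fun a => f a ≠ 0), 1 :=
        Finset.sum_le_sum fun a _ => h1 a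
    _ = (Finset.univ.filter (fun a => f a ≠ 0)).card := by simp
    _ ≤ 1 := Finset.card_le_one.mpr fun a ha b hb =>
        h2 a b (Finset.mem_filter.mp ha).2 (Finset.mem_filter.mp hb).2

private lemma two_ones_contra {n N : ℕ} {h : Fin n → Fin N → ℕ}
    (hcap : ∀ t, ∑ j, h j t ≤ 1) {j1 j2 : Fin n} (hne : j1 ≠ j2) (t : Fin N)
    (e1 : h j1 t = 1) (e2 : h j2 t = 1) : False := by
  have hsub : ({j1, j2} : Finset (Fin n)) ⊆ Finset.univ := Finset.subset_univ _
  have : 2 ≤ ∑ j, h j t := by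
    calc 2 = ∑ j ∈ ({j1, j2} : Finset (Fin n)), h j t := by
          rw [Finset.sum_pair hne, e1, e2]
      _ ≤ ∑ j, h j t := Finset.sum_le_sum_of_subset hsub
  have := hcap t
  omega

/-- Correctness of the reduction from Independent Set to shapes scheduling with a single
machine: a graph `G` with `n` vertices, edges `e 1, …, e m`, and no isolated vertices
has an independent set of size `k` iff the `n` jobs can each be assigned a vertex shape
or a dummy shape so that every coordinate is used by at most one job. -/
theorem independent_set_iff_shapes {V : Type*} [Fintype V] [DecidableEq V]
    (G : SimpleGraph V) (n m k : ℕ) (hn : Fintype.card V = n) (hk : k ≤ n)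
    (e : Fin m → Sym2 V) (he : ∀ s : Sym2 V, s ∈ G.edgeSet ↔ ∃ i, e i = s)
    (hinj : Function.Injective e)
    (hiso : ∀ v : V, ∃ w : V, G.Adj v w) :
    (∃ I : Finset V, I.card = k ∧ ∀ v ∈ I, ∀ w ∈ I, ¬ G.Adj v w) ↔
      ∃ h : Fin n → (Fin (m + (n - k)) → ℕ),
        (∀ j, (∃ v : V, h j = vertexShape (V := V) n m k e v) ∨
          ∃ i : Fin (n - k), h j = dummyShape n m k i) ∧
        ∀ t : Fin (m + (n - k)), ∑ j, h j t ≤ 1 := by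
  classical
  constructor
  · rintro ⟨I, hI, hind⟩
    -- enumerate the independent set
    set f : Fin k → V := fun i => (I.equivFin.symm (Fin.cast hI.symm i) : V) with hf
    have hfmem : ∀ i, f i ∈ I := fun i => Finset.coe_mem _
    have hfinj : Function.Injective f := by
      intro a b hab
      have := Subtype.ext hab
      have := I.equivFin.symm.injective this
      simpa [Fin.ext_iff] using this
    refine ⟨fun j => if hj : (j : ℕ) < k then vertexShape n m k e (f ⟨j, hj⟩)
      else dummyShape n m k ⟨(j : ℕ) - k, by have := j.isLt; omega⟩, fun j => ?_, ?_⟩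
    · by_cases hj : (j : ℕ) < k
      · exact Or.inl ⟨f ⟨j, hj⟩, by simp [hj]⟩
      · exact Or.inr ⟨⟨(j : ℕ) - k, by have := j.isLt; omega⟩, by simp [hj]⟩
    · intro t
      apply sum_le_one_aux
      · intro j
        by_cases hj : (j : ℕ) < k <;>
          simp only [hj, dif_pos, dif_neg, not_false_iff, vertexShape, dummyShape] <;>
          split_ifs <;> omega
      · intro j1 j2 hne1 hne2
        by_cases ht : (t : ℕ) < m
        · -- both jobs must be vertex jobs whose vertex is incident to edge t
          have key : ∀ j : Fin n,
              (if hj : (j : ℕ) < k then vertexShape n m k e (f ⟨j, hj⟩)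
                else dummyShape n m k ⟨(j : ℕ) - k, by have := j.isLt; omega⟩) t ≠ 0 →
              ∃ hj : (j : ℕ) < k, f ⟨j, hj⟩ ∈ e ⟨t, ht⟩ := by
            intro j hne
            by_cases hj : (j : ℕ) < k
            · refine ⟨hj, ?_⟩
              simp only [hj, dif_pos, vertexShape, ht] at hne
              by_contra hmem
              simp [hmem] at hne
            · exfalso
              simp only [hj, dif_neg, not_false_iff, dummyShape] at hne
              split_ifs at hne with heq
              · omega
              · exact hne rfl
          obtain ⟨hj1, hm1⟩ := key j1 hne1
          obtain ⟨hj2, hm2⟩ := key j2 hne2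
          by_contra hjne
          have hfne : f ⟨j1, hj1⟩ ≠ f ⟨j2, hj2⟩ := by
            intro hfeq
            exact hjne (by simpa [Fin.ext_iff] using hfinj hfeq)
          have hedge : e ⟨t, ht⟩ ∈ G.edgeSet := (he _).mpr ⟨_, rfl⟩
          have : e ⟨t, ht⟩ = s(f ⟨j1, hj1⟩, f ⟨j2, hj2⟩) :=
            (Sym2.mem_and_mem_iff hfne).mp ⟨hm1, hm2⟩
          rw [this, SimpleGraph.mem_edgeSet] at hedge
          exact hind _ (hfmem _) _ (hfmem _) hedge
        · -- only dummy jobs are nonzero; coordinate determines the job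
          have key : ∀ j : Fin n,
              (if hj : (j : ℕ) < k then vertexShape n m k e (f ⟨j, hj⟩)
                else dummyShape n m k ⟨(j : ℕ) - k, by have := j.isLt; omega⟩) t ≠ 0 →
              ¬ (j : ℕ) < k ∧ (t : ℕ) = m + ((j : ℕ) - k) := by
            intro j hne
            by_cases hj : (j : ℕ) < k
            · exfalso
              simp [hj, vertexShape, ht] at hne
            · refine ⟨hj, ?_⟩
              simp only [hj, dif_neg, not_false_iff, dummyShape] at hne
              by_contra heq
              simp [heq] at hne
          obtain ⟨hj1, ht1⟩ := key j1 hne1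
          obtain ⟨hj2, ht2⟩ := key j2 hne2
          exact Fin.ext (by omega)
  · rintro ⟨h, hcl, hcap⟩
    -- any two distinct jobs with vertex shapes sharing an incident edge: contradiction
    have contra : ∀ {j1 j2 : Fin n}, j1 ≠ j2 → ∀ {v1 v2 : V},
        h j1 = vertexShape n m k e v1 → h j2 = vertexShape n m k e v2 →
        ∀ {i : Fin m}, v1 ∈ e i → v2 ∈ e i → False := by
      intro j1 j2 hne v1 v2 h1 h2 i hv1 hv2
      have hlt : (i : ℕ) < m + (n - k) := lt_of_lt_of_le i.isLt (Nat.le_add_right _ _)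
      refine two_ones_contra hcap hne ⟨i, hlt⟩ ?_ ?_
      · rw [h1]; simp [vertexShape, i.isLt, hv1]
      · rw [h2]; simp [vertexShape, i.isLt, hv2]
    set A : Finset (Fin n) := Finset.univ.filter
      (fun j => ∃ v, h j = vertexShape n m k e v) with hA
    set B : Finset (Fin n) := Finset.univ.filter
      (fun j => ∃ i, h j = dummyShape n m k i) with hB
    have hAspec : ∀ j ∈ A, ∃ v, h j = vertexShape n m k e v := by
      intro j hj; exact (Finset.mem_filter.mp hj).2
    have hBspec : ∀ j ∈ B, ∃ i, h j = dummyShape n m k i := by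
      intro j hj; exact (Finset.mem_filter.mp hj).2
    -- card B ≤ n - k
    have hBcard : B.card ≤ n - k := by
      have dinj : Function.Injective
          (fun j : {x // x ∈ B} => Classical.choose (hBspec j.1 j.2)) := by
        intro j1 j2 heq
        by_contra hne
        have hne' : j1.1 ≠ j2.1 := fun hv => hne (Subtype.ext hv)
        set i := Classical.choose (hBspec j1.1 j1.2) with hi
        have hd1 : h j1.1 = dummyShape n m k i := Classical.choose_spec (hBspec j1.1 j1.2)
        have heq' : Classical.choose (hBspec j1.1 j1.2)
            = Classical.choose (hBspec j2.1 j2.2) := heq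
        have hd2 : h j2.1 = dummyShape n m k i := by
          rw [Classical.choose_spec (hBspec j2.1 j2.2), hi, heq']
        have hlt : m + (i : ℕ) < m + (n - k) := by have := i.isLt; omega
        refine two_ones_contra hcap hne' ⟨m + (i : ℕ), hlt⟩ ?_ ?_
        · rw [hd1]; simp [dummyShape]
        · rw [hd2]; simp [dummyShape]
      calc B.card = Fintype.card {x // x ∈ B} := (Fintype.card_coe B).symm
        _ ≤ Fintype.card (Fin (n - k)) := Fintype.card_le_of_injective _ dinj
        _ = n - k := Fintype.card_fin _
    -- card A ≥ k
    have hAcard : k ≤ A.card := by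
      have hcover : (Finset.univ : Finset (Fin n)) ⊆ A ∪ B := by
        intro j _
        rcases hcl j with hv | hd
        · exact Finset.mem_union_left _ (Finset.mem_filter.mpr ⟨Finset.mem_univ _, hv⟩)
        · exact Finset.mem_union_right _ (Finset.mem_filter.mpr ⟨Finset.mem_univ _, hd⟩)
      have : n ≤ A.card + B.card := by
        calc n = (Finset.univ : Finset (Fin n)).card := by simp
          _ ≤ (A ∪ B).card := Finset.card_le_card hcover
          _ ≤ A.card + B.card := Finset.card_union_le _ _
      omega
    -- choose a vertex for each vertex job; this map is injective
    set g : {x // x ∈ A} → V := fun j => Classical.choose (hAspec j.1 j.2) with hg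
    have hgspec : ∀ j : {x // x ∈ A}, h j.1 = vertexShape n m k e (g j) :=
      fun j => Classical.choose_spec (hAspec j.1 j.2)
    have ginj : Function.Injective g := by
      intro j1 j2 heq
      by_contra hne
      have hne' : j1.1 ≠ j2.1 := fun hv => hne (Subtype.ext hv)
      obtain ⟨w, hw⟩ := hiso (g j1)
      obtain ⟨i, hi⟩ := (he s(g j1, w)).mp (G.mem_edgeSet.mpr hw)
      have hm1 : g j1 ∈ e i := by rw [hi]; exact Sym2.mem_mk_left _ _
      have hm2 : g j2 ∈ e i := by rw [← heq]; exact hm1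
      exact contra hne' (hgspec j1) (hgspec j2) hm1 hm2
    have himg : k ≤ (Finset.univ.image g).card := by
      rw [Finset.card_image_of_injective _ ginj]
      simpa using hAcard
    obtain ⟨I, hIsub, hIcard⟩ := Finset.exists_subset_card_eq himg
    refine ⟨I, hIcard, ?_⟩
    intro v hv w hw hadj
    obtain ⟨j1, _, hj1⟩ := Finset.mem_image.mp (hIsub hv)
    obtain ⟨j2, _, hj2⟩ := Finset.mem_image.mp (hIsub hw)
    have hvw : v ≠ w := G.ne_of_adj hadj
    have hne' : j1.1 ≠ j2.1 := by
      intro hvv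
      apply hvw
      rw [← hj1, ← hj2]
      exact congrArg g (Subtype.ext hvv)
    obtain ⟨i, hi⟩ := (he s(v, w)).mp (G.mem_edgeSet.mpr hadj)
    have hm1 : g j1 ∈ e i := by rw [hi, hj1]; exact Sym2.mem_mk_left _ _
    have hm2 : g j2 ∈ e i := by rw [hi, hj2]; exact Sym2.mem_mk_right _ _
    exact contra hne' (hgspec j1) (hgspec j2) hm1 hm2
end
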